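/- arXiv:1004.1938 — 9 statements merged into one kernel-verified Lean document; each statement's English description precedes it below -/
import Mathlib

section
/- Let n and d₀ be positive integers, and let C, A ⊆ S_n be such that d(f,g) ≥ d₀ for all distinct f,g ∈ C, and d(f,g) ≤ d₀ − 1 for all f,g ∈ A. Then |C|·|A| ≤ n!. -/
/-- The ℓ∞-distance between two permutations of `Fin n`:
`d(f,g) = max_{1 ≤ i ≤ n} |f(i) - g(i)|`. -/
def linfDist {n : ℕ} (f g : Equiv.Perm (Fin n)) : ℕ :=
  Finset.univ.sup fun i : Fin n => ((f i : ℤ) - (g i : ℤ)).natAbs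

/-- ℓ∞-distance is right-invariant. -/
lemma linfDist_mul_right {n : ℕ} (f h g : Equiv.Perm (Fin n)) :
    linfDist (f * g) (h * g) = linfDist f h := by
  unfold linfDist
  have : (fun i : Fin n => (((f * g) i : ℤ) - ((h * g) i : ℤ)).natAbs)
      = (fun i : Fin n => ((f i : ℤ) - (h i : ℤ)).natAbs) ∘ g := rfl
  rw [this, ← Finset.sup_image]
  congr 1
  exact Finset.image_univ_equiv g

/-- **Set-antiset theorem.** If `C` is a code of minimal ℓ∞-distance `d₀` and `A` is an
anticode of maximal ℓ∞-distance `d₀ - 1` in the symmetric group `S_n`, then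
`|C| · |A| ≤ n!`. -/
theorem set_antiset (n d₀ : ℕ) (hn : 0 < n) (hd : 0 < d₀)
    (C A : Finset (Equiv.Perm (Fin n)))
    (hC : ∀ f ∈ C, ∀ g ∈ C, f ≠ g → d₀ ≤ linfDist f g)
    (hA : ∀ f ∈ A, ∀ g ∈ A, linfDist f g ≤ d₀ - 1) :
    C.card * A.card ≤ n.factorial := by
  classical
  have hinj : ∀ p ∈ C ×ˢ A, ∀ q ∈ C ×ˢ A,
      (fun p : Equiv.Perm (Fin n) × Equiv.Perm (Fin n) => p.2⁻¹ * p.1) p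
        = (fun p : Equiv.Perm (Fin n) × Equiv.Perm (Fin n) => p.2⁻¹ * p.1) q → p = q := by
    rintro ⟨c, a⟩ hp ⟨c', a'⟩ hq h
    simp only at h
    simp only [Finset.mem_product] at hp hq
    have hc : c = a * a'⁻¹ * c' := by
      have := congrArg (fun x => a * x) h
      simpa [mul_assoc] using this
    have hdist : linfDist c c' = linfDist a a' := by
      calc linfDist c c' = linfDist (a * a'⁻¹ * c') (1 * c') := by rw [← hc, one_mul]
        _ = linfDist (a * a'⁻¹) 1 := linfDist_mul_right _ _ _
        _ = linfDist (a * a'⁻¹ * a') (1 * a') := (linfDist_mul_right _ _ _).symm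
        _ = linfDist a a' := by rw [one_mul]; congr 1; group
    have hcc : c = c' := by
      by_contra hne
      have h1 := hC c hp.1 c' hq.1 hne
      have h2 := hA a hp.2 a' hq.2
      omega
    subst hcc
    have : a'⁻¹ = a⁻¹ := by
      have := mul_right_cancel h
      exact this.symm ▸ rfl
    have ha : a = a' := by
      have := inv_injective this
      exact this.symm
    simp [ha]
  have hcard : (C ×ˢ A).card ≤ Fintype.card (Equiv.Perm (Fin n)) := by
    rw [← Finset.card_univ]
    exact Finset.card_le_card_of_injOn _ (fun _ _ => Finset.mem_univ _) hinj
  rw [Fintype.card_perm, Fintype.card_fin] at hcard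
  simpa [Finset.card_product] using hcard
end

section
/- Let d, r be integers with 0 < r < d, set n = d + r, and let A ∈ Γ_n^d. If 1 ≤ m ≤ k ≤ r, then for every i ∈ {1,…,n}, per(A_{i,m}) ≥ per(A_{i,k}). If d+1 ≤ m ≤ k ≤ d+r, then for every i ∈ {1,…,n}, per(A_{i,m}) ≤ per(A_{i,k}). -/
/-- The permanent of an `n × n` matrix: `per(A) = ∑_{σ ∈ S_n} ∏_i A i (σ i)`. -/
def permanent {n : ℕ}  (A : Matrix (Fin n) (Fin n) ℕ) : ℕ :=
  ∑ σ : Equiv.Perm (Fin n), ∏ i, A i (σ i)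

/-- The `(0,1)`-matrix determined by the configuration `x` (1-indexed starting columns):
entry `(i,j)` (with `j : Fin n` representing column `j+1`) is `1` iff
`x i ≤ j+1 ≤ x i + d - 1`. -/
def confMatrix (n d : ℕ) (x : Fin n → ℕ) : Matrix (Fin n) (Fin n) ℕ :=
  fun i j => if x i ≤ (j : ℕ) + 1 ∧ (j : ℕ) + 1 ≤ x i + d - 1 then 1 else 0

/-- A valid configuration for `Γ_n^d`: `1 ≤ x i ≤ n - d + 1` for all `i`. -/
def ValidConf (n d : ℕ) (x : Fin n → ℕ) : Prop :=
  ∀ i, 1 ≤ x i ∧ x i ≤ n - d + 1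

/-- Membership in `Γ_n^d`: the set of `n × n` `(0,1)`-matrices each of whose rows has
exactly `d` ones forming a contiguous block. -/
def IsGamma (n d : ℕ) (A : Matrix (Fin n) (Fin n) ℕ) : Prop :=
  ∃ x : Fin n → ℕ, ValidConf n d x ∧ A = confMatrix n d x

/-- `A_{i,j}`: the matrix obtained from `A` by deleting row `i` and column `j`. -/
def delMinor {n : ℕ} (A : Matrix (Fin (n + 1)) (Fin (n + 1)) ℕ) (i j : Fin (n + 1)) :
    Matrix (Fin n) (Fin n) ℕ :=
  A.submatrix i.succAbove j.succAbove

/-!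
Deleting column `c'` instead of `c` amounts to replacing column `c'` of the minor by column `c`
(after reordering columns, which does not change a permanent), so if column `c` is entrywise
below column `c'` then `per(A_{i,c'}) ≤ per(A_{i,c})` by monotonicity of the permanent.
For `A ∈ Γ_{d+r}^d` with `r < d`, every block starts at or before column `r + 1` and ends at or
after column `d`; hence along the first `r` columns the entries of each row can only rise from
`0` to `1`, and along the last `r` columns only drop from `1` to `0`.
-/

open Function

lemma permanent_eq_matrix_permanent {n : ℕ} (A : Matrix (Fin n) (Fin n) ℕ) :
    permanent A = A.permanent :=
  A.permanent_transpose

lemma permanent_mono {n : ℕ} {B C : Matrix (Fin n) (Fin n) ℕ} (h : ∀ i j, B i j ≤ C i j) :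
    permanent B ≤ permanent C :=
  Finset.sum_le_sum fun σ _ => Finset.prod_le_prod' fun i _ => h i (σ i)

lemma permanent_submatrix_eq_of_range_eq {n : ℕ} {α : Type*} (B : Matrix (Fin n) α ℕ)
    {f g : Fin n → α} (hf : Injective f) (hg : Injective g) (h : Set.range f = Set.range g) :
    permanent (B.submatrix id f) = permanent (B.submatrix id g) := by
  let e : Fin n ≃ Fin n :=
    (Equiv.ofInjective f hf).trans ((Equiv.setCongr h).trans (Equiv.ofInjective g hg).symm)
  have hge : g ∘ e = f := funext fun j => by simp [e, Equiv.apply_ofInjective_symm]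
  rw [← hge, permanent_eq_matrix_permanent, permanent_eq_matrix_permanent,
    ← Matrix.permanent_permute_rows e (B.submatrix id g)]
  rfl

lemma range_swap_comp_succAbove {n : ℕ} (c c' : Fin (n + 1)) :
    Set.range (Equiv.swap c c' ∘ c.succAbove) = Set.range c'.succAbove := by
  rw [Set.range_comp, Fin.range_succAbove, Fin.range_succAbove, Equiv.image_compl,
    Set.image_singleton, Equiv.swap_apply_left]

lemma permanent_delMinor_le_of_col_le {n : ℕ} (A : Matrix (Fin (n + 1)) (Fin (n + 1)) ℕ)
    (i : Fin (n + 1)) {c c' : Fin (n + 1)} (h : ∀ i', A i' c ≤ A i' c') :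
    permanent (delMinor A i c') ≤ permanent (delMinor A i c) := by
  let B := A.submatrix i.succAbove id
  have hswap : ∀ r k, k ≠ c → B r (Equiv.swap c c' k) ≤ B r k := by
    intro r k hk
    by_cases hk' : k = c'
    · subst hk'
      simpa [B] using h _
    · rw [Equiv.swap_apply_of_ne_of_ne hk hk']
  calc permanent (delMinor A i c')
      = permanent (B.submatrix id c'.succAbove) := rfl
    _ = permanent (B.submatrix id (Equiv.swap c c' ∘ c.succAbove)) :=
        permanent_submatrix_eq_of_range_eq B Fin.succAbove_right_injective
          ((Equiv.injective _).comp Fin.succAbove_right_injective)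
          (range_swap_comp_succAbove c c').symm
    _ ≤ permanent (B.submatrix id c.succAbove) :=
        permanent_mono fun r j => hswap r _ (Fin.succAbove_ne c j)
    _ = permanent (delMinor A i c) := rfl

lemma confMatrix_apply_le_apply_of_le_of_add_one_le {n d : ℕ} {x : Fin n → ℕ} {i j j' : Fin n}
    (hx : 1 ≤ x i) (hj : (j : ℕ) ≤ j') (hj' : (j' : ℕ) + 1 ≤ d) :
    confMatrix n d x i j ≤ confMatrix n d x i j' := by
  simp only [confMatrix]
  split_ifs <;> omega

lemma confMatrix_apply_le_apply_of_le_add_one_of_le {n d : ℕ} {x : Fin n → ℕ} {i j j' : Fin n}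
    (hx : x i ≤ (j : ℕ) + 1) (hj : (j : ℕ) ≤ j') :
    confMatrix n d x i j' ≤ confMatrix n d x i j := by
  simp only [confMatrix]
  split_ifs <;> omega

theorem minor_permanent_monotone_general (d r m : ℕ) (hrd : r < d)
    (hn : m + 1 = d + r)
    (A : Matrix (Fin (m + 1)) (Fin (m + 1)) ℕ) (hA : IsGamma (m + 1) d A) :
    (∀ c₁ c₂ : Fin (m + 1), (c₁ : ℕ) ≤ (c₂ : ℕ) → (c₂ : ℕ) + 1 ≤ r →
      ∀ i : Fin (m + 1), permanent (delMinor A i c₂) ≤ permanent (delMinor A i c₁)) ∧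
    (∀ c₁ c₂ : Fin (m + 1), d + 1 ≤ (c₁ : ℕ) + 1 → (c₁ : ℕ) ≤ (c₂ : ℕ) →
      ∀ i : Fin (m + 1), permanent (delMinor A i c₁) ≤ permanent (delMinor A i c₂)) := by
  obtain ⟨x, hx, rfl⟩ := hA
  refine ⟨fun c₁ c₂ hle hc₂ i => ?_, fun c₁ c₂ hc₁ hle i => ?_⟩ <;>
    refine permanent_delMinor_le_of_col_le _ i fun i' => ?_ <;>
    obtain ⟨hx₁, hx₂⟩ := hx i'
  · exact confMatrix_apply_le_apply_of_le_of_add_one_le hx₁ hle (by omega)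
  · exact confMatrix_apply_le_apply_of_le_add_one_of_le (by omega) hle

/-- For `A ∈ Γ_n^d`, `n = d + r`, `0 < r < d`: if `1 ≤ m ≤ k ≤ r` (columns `c₂, c₁`
below represent `m = c₂+1`, `k = c₁+1`... stated directly: for columns `c₁+1 ≤ c₂+1 ≤ r`)
then `per(A_{i,c₁}) ≥ per(A_{i,c₂})` for every row `i`; and if `d+1 ≤ c₁+1 ≤ c₂+1 ≤ d+r`
then `per(A_{i,c₁}) ≤ per(A_{i,c₂})` for every row `i`. -/
theorem minor_permanent_monotone (d r m : ℕ) (hr : 0 < r) (hrd : r < d)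
    (hn : m + 1 = d + r)
    (A : Matrix (Fin (m + 1)) (Fin (m + 1)) ℕ) (hA : IsGamma (m + 1) d A) :
    (∀ c₁ c₂ : Fin (m + 1), (c₁ : ℕ) ≤ (c₂ : ℕ) → (c₂ : ℕ) + 1 ≤ r →
      ∀ i : Fin (m + 1), permanent (delMinor A i c₂) ≤ permanent (delMinor A i c₁)) ∧
    (∀ c₁ c₂ : Fin (m + 1), d + 1 ≤ (c₁ : ℕ) + 1 → (c₁ : ℕ) ≤ (c₂ : ℕ) →
      ∀ i : Fin (m + 1), permanent (delMinor A i c₁) ≤ permanent (delMinor A i c₂)) :=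
  minor_permanent_monotone_general d r m hrd hn A hA
end

section
/- Let d, r be integers with 0 < r < d, set n = d + r, and let A = (x_1,…,x_n) ∈ Γ_n^d with x_1 ≤ x_2 ≤ … ≤ x_n. If i is such that 2 ≤ x_i ≤ r, then per(A) ≤ max{ per_i^+(A), per_i^−(A) }. -/
/-- `i^* = max { k : x k = x i }`. -/
def istar {n : ℕ} (x : Fin n → ℕ) (i : Fin n) : Fin n :=
  (Finset.univ.filter fun k => x k = x i).max' ⟨i, by simp⟩

/-- `i_* = min { k : x k = x i }`. -/
def isubstar {n : ℕ} (x : Fin n → ℕ) (i : Fin n) : Fin n :=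
  (Finset.univ.filter fun k => x k = x i).min' ⟨i, by simp⟩

/-- `per_i^+`: the permanent of the configuration obtained by moving the non-zero block of
row `i^*` one step to the right. -/
def perPlus (n d : ℕ) (x : Fin n → ℕ) (i : Fin n) : ℕ :=
  permanent (confMatrix n d (Function.update x (istar x i) (x (istar x i) + 1)))

/-- `per_i^-`: the permanent of the configuration obtained by moving the non-zero block of
row `i_*` one step to the left. -/
def perMinus (n d : ℕ) (x : Fin n → ℕ) (i : Fin n) : ℕ :=
  permanent (confMatrix n d (Function.update x (isubstar x i) (x (isubstar x i) - 1)))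

/-!
Let `c = x_i`, `q = i^*`, `p = i_*`, so that rows `p` and `q` both carry the block `[c, c + d - 1]`,
and count permutations `σ` supported by the blocks (1-indexed columns). Those with `σ q ≠ c` are
supported after moving row `q` right, and there do not send `q` to `c + d`; those with
`σ p ≠ c + d - 1` are supported after moving row `p` left, and there do not send `p` to `c - 1`.
The remaining ones are exchanged: if `σ p = c + d - 1`, the row `k` sent to `c + d` takes column
`c + d - 1` from `p`, `p` takes `σ q` and `q` takes `c + d`; symmetrically if `σ q = c`. Row `k`
may take its new column because, for `2 ≤ c ≤ r < d`, every block meets `[c, c + d - 1]`.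
Adding up the four counts gives `2 per(A) ≤ per_i^+(A) + per_i^-(A)`.
-/

open Finset Equiv

section AdmissiblePerms

variable {α : Type*} [Fintype α] [DecidableEq α]

def admissiblePerms (A : α → α → Prop) [DecidableRel A] : Finset (Perm α) :=
  univ.filter fun σ => ∀ k, A k (σ k)

variable {A B : α → α → Prop} [DecidableRel A] [DecidableRel B]

theorem mem_admissiblePerms {σ : Perm α} : σ ∈ admissiblePerms A ↔ ∀ k, A k (σ k) := by
  simp [admissiblePerms]

theorem filter_admissiblePerms_subset {q b : α} {P : α → Prop} [DecidablePred P]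
    (hAB : ∀ k, k ≠ q → ∀ j, B k j ↔ A k j) (hq : ∀ j, A q j → P j → B q j ∧ j ≠ b) :
    (admissiblePerms A).filter (fun σ => P (σ q)) ⊆ (admissiblePerms B).filter (· q ≠ b) := by
  intro σ
  simp only [mem_filter, mem_admissiblePerms]
  rintro ⟨hσ, hσq⟩
  refine ⟨fun k => ?_, (hq _ (hσ q) hσq).2⟩
  rcases eq_or_ne k q with rfl | hkq
  · exact (hq _ (hσ k) hσq).1
  · exact (hAB k hkq _).mpr (hσ k)

/-- The exchange `σ ↦ σ * swap q p * swap q (σ⁻¹ b)`: row `q` takes column `b`, the row that had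
`b` takes `σ p = a`, and `p` takes `σ q`. -/
theorem card_filter_admissiblePerms_le_of_exchange {p q a b : α}
    (hAB : ∀ k, k ≠ q → ∀ j, B k j ↔ A k j) (hqp : ∀ j, A q j → A p j)
    (hBqb : B q b) (hAqb : ¬ A q b) (hab : a ≠ b) (hba : ∀ k, k ≠ q → A k b → B k a) :
    #((admissiblePerms A).filter (· p = a)) ≤ #((admissiblePerms B).filter (· q = b)) := by
  refine card_le_card_of_injOn (fun σ => σ * swap q p * swap q (σ⁻¹ b)) ?_
    (Set.LeftInvOn.injOn (f₁' := fun τ => τ * swap q (τ⁻¹ a) * swap q p) ?_)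
  all_goals
    intro σ hσ
    simp only [mem_coe, mem_filter, mem_admissiblePerms] at hσ ⊢
    obtain ⟨hσ, hσp⟩ := hσ
    have hσk : σ (σ⁻¹ b) = b := Perm.eq_inv_iff_eq.mp rfl
    generalize σ⁻¹ b = k at hσk ⊢
    have hkq : k ≠ q := fun h => hAqb (h ▸ hσk ▸ hσ k)
    have hkp : k ≠ p := fun h => hab (hσp.symm.trans (h ▸ hσk))
  · simp only [Perm.mul_apply]
    refine ⟨fun m => ?_, by rwa [swap_apply_left, swap_apply_of_ne_of_ne hkq hkp]⟩
    rcases eq_or_ne m q with rfl | hmq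
    · rwa [swap_apply_left, swap_apply_of_ne_of_ne hkq hkp, hσk]
    rcases eq_or_ne m k with rfl | hmk
    · rw [swap_apply_right, swap_apply_left, hσp]
      exact hba m hmq (hσk ▸ hσ m)
    rw [swap_apply_of_ne_of_ne hmq hmk]
    rcases eq_or_ne m p with rfl | hmp
    · rw [swap_apply_right]
      exact (hAB m hmq _).mpr (hqp _ (hσ q))
    · rw [swap_apply_of_ne_of_ne hmq hmp]
      exact (hAB m hmq _).mpr (hσ m)
  · have hk : (σ * swap q p * swap q k)⁻¹ a = k := by
      rw [Perm.inv_eq_iff_eq, Perm.mul_apply, Perm.mul_apply, swap_apply_right, swap_apply_left,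
        hσp]
    rw [hk, mul_assoc (σ * swap q p), swap_mul_self, mul_one, mul_assoc, swap_mul_self, mul_one]

end AdmissiblePerms

theorem permanent_eq_card_admissiblePerms {n : ℕ} (A : Fin n → Fin n → Prop) [DecidableRel A] :
    permanent (fun i j => if A i j then 1 else 0) = #(admissiblePerms A) := by
  rw [admissiblePerms, card_filter]
  refine sum_congr rfl fun σ _ => ?_
  rw [prod_boole]
  simp

def blockRel {n : ℕ} (d : ℕ) (x : Fin n → ℕ) (k j : Fin n) : Prop :=
  x k ≤ (j : ℕ) + 1 ∧ (j : ℕ) + 1 ≤ x k + d - 1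

instance {n d : ℕ} (x : Fin n → ℕ) : DecidableRel (blockRel d x) :=
  fun _ _ => inferInstanceAs (Decidable (_ ∧ _))

theorem permanent_confMatrix {n : ℕ} (d : ℕ) (x : Fin n → ℕ) :
    permanent (confMatrix n d x) = #(admissiblePerms (blockRel d x)) :=
  permanent_eq_card_admissiblePerms _

theorem blockRel_update_of_ne {n d : ℕ} {x : Fin n → ℕ} {k₀ k : Fin n} {v : ℕ} (hk : k ≠ k₀)
    (j : Fin n) : blockRel d (Function.update x k₀ v) k j ↔ blockRel d x k j := by
  rw [blockRel, blockRel, Function.update_of_ne hk]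

section Shift

variable {n d c : ℕ} {x : Fin n → ℕ} {p q : Fin n}

theorem card_filter_add_card_filter_le_shiftRight (hp : x p = c) (hq : x q = c) (hc : 0 < c)
    (hcn : c + d ≤ n) (hx : ∀ k, x k < c + d) :
    #((admissiblePerms (blockRel d x)).filter fun σ => (σ q : ℕ) + 1 ≠ c) +
        #((admissiblePerms (blockRel d x)).filter fun σ => (σ p : ℕ) + 1 = c + d - 1) ≤
      #(admissiblePerms (blockRel d (Function.update x q (c + 1)))) := by
  have hd : 1 ≤ d := by have := hx q; omega
  obtain ⟨colLast, hcolLast⟩ : ∃ j : Fin n, (j : ℕ) = c + d - 2 := ⟨⟨c + d - 2, by omega⟩, rfl⟩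
  obtain ⟨colAfter, hcolAfter⟩ : ∃ j : Fin n, (j : ℕ) = c + d - 1 := ⟨⟨c + d - 1, by omega⟩, rfl⟩
  set S := admissiblePerms (blockRel d x)
  set S' := admissiblePerms (blockRel d (Function.update x q (c + 1)))
  have hsub : S.filter (fun σ => (σ q : ℕ) + 1 ≠ c) ⊆ S'.filter (· q ≠ colAfter) :=
    filter_admissiblePerms_subset (P := fun j : Fin n => (j : ℕ) + 1 ≠ c)
      (fun _ hk => blockRel_update_of_ne hk) fun j h hj => by
      simp only [blockRel, Function.update_self, hq, ne_eq, Fin.ext_iff] at h hj ⊢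
      omega
  have hexchange : #(S.filter (· p = colLast)) ≤ #(S'.filter (· q = colAfter)) := by
    refine card_filter_admissiblePerms_le_of_exchange (fun _ hk => blockRel_update_of_ne hk)
      (fun j h => by rwa [blockRel, hp, ← hq]) ?_ ?_ ?_ fun k hk h => ?_
    · simp only [blockRel, Function.update_self]
      omega
    · simp only [blockRel, hq]
      omega
    · simp only [ne_eq, Fin.ext_iff]
      omega
    · rw [blockRel_update_of_ne hk]
      simp only [blockRel] at h ⊢
      have := hx k
      omega
  have hlast : S.filter (fun σ => (σ p : ℕ) + 1 = c + d - 1) = S.filter (· p = colLast) :=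
    filter_congr fun σ _ => by rw [Fin.ext_iff]; omega
  have hsplit := card_filter_add_card_filter_not (s := S') (· q = colAfter)
  have hsubCard := card_le_card hsub
  rw [hlast]
  simp only [ne_eq] at hsubCard ⊢
  omega

theorem card_filter_add_card_filter_le_shiftLeft (hp : x p = c) (hq : x q = c) (hc : 2 ≤ c)
    (hcn : c ≤ n) (hx : ∀ k, c < x k + d) :
    #((admissiblePerms (blockRel d x)).filter fun σ => (σ p : ℕ) + 1 ≠ c + d - 1) +
        #((admissiblePerms (blockRel d x)).filter fun σ => (σ q : ℕ) + 1 = c) ≤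
      #(admissiblePerms (blockRel d (Function.update x p (c - 1)))) := by
  have hd : 1 ≤ d := by have := hx p; omega
  obtain ⟨colBefore, hcolBefore⟩ : ∃ j : Fin n, (j : ℕ) = c - 2 := ⟨⟨c - 2, by omega⟩, rfl⟩
  obtain ⟨colFirst, hcolFirst⟩ : ∃ j : Fin n, (j : ℕ) = c - 1 := ⟨⟨c - 1, by omega⟩, rfl⟩
  set S := admissiblePerms (blockRel d x)
  set S' := admissiblePerms (blockRel d (Function.update x p (c - 1)))
  have hsub : S.filter (fun σ => (σ p : ℕ) + 1 ≠ c + d - 1) ⊆ S'.filter (· p ≠ colBefore) :=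
    filter_admissiblePerms_subset (P := fun j : Fin n => (j : ℕ) + 1 ≠ c + d - 1)
      (fun _ hk => blockRel_update_of_ne hk) fun j h hj => by
      simp only [blockRel, Function.update_self, hp, ne_eq, Fin.ext_iff] at h hj ⊢
      omega
  have hexchange : #(S.filter (· q = colFirst)) ≤ #(S'.filter (· p = colBefore)) := by
    refine card_filter_admissiblePerms_le_of_exchange (fun _ hk => blockRel_update_of_ne hk)
      (fun j h => by rwa [blockRel, hq, ← hp]) ?_ ?_ ?_ fun k hk h => ?_
    · simp only [blockRel, Function.update_self]
      omega
    · simp only [blockRel, hp]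
      omega
    · simp only [ne_eq, Fin.ext_iff]
      omega
    · rw [blockRel_update_of_ne hk]
      simp only [blockRel] at h ⊢
      have := hx k
      omega
  have hfirst : S.filter (fun σ => (σ q : ℕ) + 1 = c) = S.filter (· q = colFirst) :=
    filter_congr fun σ _ => by rw [Fin.ext_iff]; omega
  have hsplit := card_filter_add_card_filter_not (s := S') (· p = colBefore)
  have hsubCard := card_le_card hsub
  rw [hfirst]
  simp only [ne_eq] at hsubCard ⊢
  omega

end Shift

theorem two_mul_permanent_le_add {n d c : ℕ} {x : Fin n → ℕ} {p q : Fin n}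
    (hp : x p = c) (hq : x q = c) (hc : 2 ≤ c) (hcn : c + d ≤ n)
    (hx : ∀ k, x k < c + d ∧ c < x k + d) :
    2 * permanent (confMatrix n d x) ≤
      permanent (confMatrix n d (Function.update x q (c + 1))) +
        permanent (confMatrix n d (Function.update x p (c - 1))) := by
  rw [permanent_confMatrix, permanent_confMatrix, permanent_confMatrix]
  have hright := card_filter_add_card_filter_le_shiftRight hp hq (by omega) hcn fun k => (hx k).1
  have hleft := card_filter_add_card_filter_le_shiftLeft hp hq hc (by omega) fun k => (hx k).2
  have hsplitq := card_filter_add_card_filter_not (s := admissiblePerms (blockRel d x))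
    fun σ => (σ q : ℕ) + 1 = c
  have hsplitp := card_filter_add_card_filter_not (s := admissiblePerms (blockRel d x))
    fun σ => (σ p : ℕ) + 1 = c + d - 1
  simp only [ne_eq] at hright hleft
  omega

theorem apply_istar {n : ℕ} (x : Fin n → ℕ) (i : Fin n) : x (istar x i) = x i :=
  (mem_filter.mp (max'_mem (univ.filter fun k => x k = x i) _)).2

theorem apply_isubstar {n : ℕ} (x : Fin n → ℕ) (i : Fin n) : x (isubstar x i) = x i :=
  (mem_filter.mp (min'_mem (univ.filter fun k => x k = x i) _)).2

theorem per_le_max_push_general (d r : ℕ) (hrd : r < d)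
    (x : Fin (d + r) → ℕ) (hx : ValidConf (d + r) d x)
    (i : Fin (d + r)) (h2 : 2 ≤ x i) (hir : x i ≤ r) :
    permanent (confMatrix (d + r) d x) ≤
      max (perPlus (d + r) d x i) (perMinus (d + r) d x i) := by
  have key := two_mul_permanent_le_add (d := d) (apply_isubstar x i) (apply_istar x i) h2
    (by omega) fun k => by have := hx k; omega
  rw [perPlus, perMinus, apply_istar x i, apply_isubstar x i]
  omega

/-- For `A = (x₁,…,x_n) ∈ Γ_n^d`, `n = d + r`, `0 < r < d`, with `x₁ ≤ … ≤ x_n`: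
if `2 ≤ x i ≤ r` then `per(A) ≤ max { per_i^+(A), per_i^-(A) }`. -/
theorem per_le_max_push (d r : ℕ) (hr : 0 < r) (hrd : r < d)
    (x : Fin (d + r) → ℕ) (hx : ValidConf (d + r) d x) (hmono : Monotone x)
    (i : Fin (d + r)) (h2 : 2 ≤ x i) (hir : x i ≤ r) :
    permanent (confMatrix (d + r) d x) ≤
      max (perPlus (d + r) d x i) (perMinus (d + r) d x i) :=
  per_le_max_push_general d r hrd x hx i h2 hir
end

section
/- Let d, r be integers with 0 < r ≤ d and set n = d + r. For every A ∈ Γ_n^d, per(A) ≤ C(d−r, ⌊(d−r)/2⌋) · (⌊(d+r)/2⌋)! · (⌈(d+r)/2⌉)!, where C(·,·) denotes the binomial coefficient. -/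
/-!
Fix all rows but row `i`. Expanding along row `i`, the permanent is the sum of the `d` consecutive
permanental minors `S m` of the columns that row `i` covers. Giving row `i` a column that
dominates another one (off row `i`) leaves fewer completions, so `S` decreases on the first `d`
columns and increases on the last `d`. Hence the permanent is convex in the starting position of
row `i` and is largest at `1` or `r + 1`; moving the rows one at a time reduces to matrices with
`a` rows starting at `1` and `b = n - a` rows at `r + 1`. There the first `r` columns are matched
to rows of the first kind, the last `r` columns to rows of the second kind and the middle `d - r`
columns to the remaining rows, so the permanent is at most `a^(r) b^(r) (d - r)!` (falling
factorials), which is largest when `a` and `b` are balanced.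
-/

open Finset Function Equiv
open scoped Nat

namespace Equiv.Perm

variable {α : Type*} [Fintype α] [DecidableEq α]

theorem card_eqOn_le (C : Finset α) (π₀ : Perm α) :
    #{π : Perm α | ∀ c ∈ C, π c = π₀ c} ≤ (Fintype.card α - #C)! := by
  have hfix : #{π : Perm α | ∀ c ∈ C, π c = c} = (Fintype.card α - #C)! := by
    rw [← Fintype.card_subtype, ← Fintype.card_congr ((Perm.subtypeEquivSubtypePerm (· ∉ C)).trans
      (subtypeEquivRight fun π => by simp only [not_not])), Fintype.card_perm,
      Fintype.card_subtype_compl, Fintype.card_coe]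
  rw [← hfix]
  refine card_le_card_of_injOn (π₀⁻¹ * ·) (fun π hπ => ?_) (fun π _ π' _ h => mul_left_cancel h)
  simp only [coe_filter, mem_univ, true_and] at hπ ⊢
  intro c hc
  simp [hπ c hc]

theorem card_mapsTo_le {CL CR : Finset α} (hC : _root_.Disjoint CL CR) (L R : Finset α) :
    #{π : Perm α | (∀ c ∈ CL, π c ∈ L) ∧ ∀ c ∈ CR, π c ∈ R} ≤
      (#L).descFactorial #CL * (#R).descFactorial #CR * (Fintype.card α - #CL - #CR)! := by
  let inj (s t : Finset α) : Finset (s → α) := univ.image fun (e : s ↪ t) c => (e c : α)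
  have card_inj (s t : Finset α) : #(inj s t) ≤ (#t).descFactorial #s :=
    card_image_le.trans (by simp [Fintype.card_embedding_eq])
  have mem_inj {s t : Finset α} (π : Perm α) (h : ∀ c ∈ s, π c ∈ t) :
      (fun c : s => π c) ∈ inj s t :=
    mem_image.2 ⟨⟨fun c => ⟨π c, h c c.2⟩, fun c c' hc => Subtype.ext (π.injective
      (congrArg Subtype.val hc))⟩, mem_univ _, rfl⟩
  let restrict (π : Perm α) : (CL → α) × (CR → α) := (fun c => π c, fun c => π c)
  set S : Finset (Perm α) := {π | (∀ c ∈ CL, π c ∈ L) ∧ ∀ c ∈ CR, π c ∈ R}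
  calc _ ≤ (Fintype.card α - #CL - #CR)! * #(inj CL L ×ˢ inj CR R) := by
        refine card_le_mul_card_image_of_maps_to (f := restrict)
          (fun π hπ => ?_) _ (fun p _ => ?_)
        · simp only [S, mem_filter, mem_univ, true_and] at hπ
          exact mem_product.2 ⟨mem_inj π hπ.1, mem_inj π hπ.2⟩
        · obtain h | ⟨π₀, hπ₀⟩ := ({π ∈ S | restrict π = p} : Finset _).eq_empty_or_nonempty
          · simp [h]
          have hagree : ∀ π ∈ ({π ∈ S | restrict π = p} : Finset _), restrict π = restrict π₀ :=
            fun π hπ => (mem_filter.1 hπ).2.trans (mem_filter.1 hπ₀).2.symm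
          calc _ ≤ #{π : Perm α | ∀ c ∈ CL ∪ CR, π c = π₀ c} := by
                refine card_le_card fun π hπ => mem_filter.2 ⟨mem_univ _, fun c hc => ?_⟩
                obtain hc | hc := mem_union.1 hc
                · exact congrFun (congrArg Prod.fst (hagree π hπ)) ⟨c, hc⟩
                · exact congrFun (congrArg Prod.snd (hagree π hπ)) ⟨c, hc⟩
            _ ≤ _ := card_eqOn_le _ _
            _ = _ := by rw [card_union_of_disjoint hC, Nat.sub_sub]
    _ ≤ _ := by
        rw [card_product, mul_comm]
        exact Nat.mul_le_mul_right _ (Nat.mul_le_mul (card_inj _ _) (card_inj _ _))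

end Equiv.Perm

section Permanent

variable {n : ℕ}

theorem permanent_ite_eq_card (P : Fin n → Fin n → Prop) [∀ i j, Decidable (P i j)] :
    permanent (fun i j => if P i j then 1 else 0) = #{σ : Perm (Fin n) | ∀ i, P i (σ i)} := by
  simp only [permanent, prod_boole, mem_univ, true_implies, sum_boole, Nat.cast_id]

/-- The permanent of `A` with row `i` and column `m` deleted. Columns are indexed by `ℕ` so that
windows of columns can be shifted freely; the value is `0` for `m ≥ n`. -/
def completionsAt (A : Matrix (Fin n) (Fin n) ℕ) (i : Fin n) (m : ℕ) : ℕ :=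
  ∑ σ : Perm (Fin n) with (σ i : ℕ) = m, ∏ j ∈ univ.erase i, A j (σ j)

theorem permanent_eq_sum_mul_completionsAt (A : Matrix (Fin n) (Fin n) ℕ) (i : Fin n) :
    permanent A = ∑ c : Fin n, A i c * completionsAt A i c := by
  unfold permanent completionsAt
  rw [← sum_fiberwise univ (fun σ : Perm (Fin n) => σ i)]
  refine sum_congr rfl fun c _ => ?_
  simp only [Fin.val_inj, mul_sum]
  refine sum_congr rfl fun σ hσ => ?_
  rw [← (mem_filter.1 hσ).2, mul_prod_erase univ (fun j => A j (σ j)) (mem_univ i)]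

theorem completionsAt_congr {A B : Matrix (Fin n) (Fin n) ℕ} {i : Fin n}
    (h : ∀ j ≠ i, A j = B j) : completionsAt A i = completionsAt B i := by
  ext m
  refine sum_congr rfl fun σ _ => prod_congr rfl fun j hj => ?_
  rw [h j (ne_of_mem_erase hj)]

theorem completionsAt_le_of_col_le (A : Matrix (Fin n) (Fin n) ℕ) (i : Fin n) {c c' : Fin n}
    (h : ∀ j ≠ i, A j c ≤ A j c') : completionsAt A i c' ≤ completionsAt A i c := by
  unfold completionsAt
  simp only [Fin.val_inj]
  rw [← sum_nbij' (swap c c' * ·) (swap c c' * ·) (s := {σ : Perm (Fin n) | σ i = c})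
    (fun σ hσ => by simp_all) (fun σ hσ => by simp_all) (fun σ _ => by simp [← mul_assoc])
    (fun σ _ => by simp [← mul_assoc]) (fun σ _ => rfl)]
  refine sum_le_sum fun σ hσ => prod_le_prod' fun j hj => ?_
  have hσi : σ i = c := (mem_filter.1 hσ).2
  have hσj : σ j ≠ c := hσi ▸ σ.injective.ne (ne_of_mem_erase hj)
  rw [Perm.mul_apply]
  by_cases hc' : σ j = c'
  · rw [hc', swap_apply_right]
    exact h j (ne_of_mem_erase hj)
  · rw [swap_apply_of_ne_of_ne hσj hc']

end Permanent

def windowSum (S : ℕ → ℕ) (d s : ℕ) : ℕ :=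
  ∑ k ∈ range d, S (s + k)

theorem windowSum_succ_add (S : ℕ → ℕ) (d s : ℕ) :
    windowSum S d (s + 1) + S s = windowSum S d s + S (s + d) := by
  have h := (sum_range_succ' (fun k => S (s + k)) d).symm.trans (sum_range_succ _ d)
  simpa only [windowSum, add_zero, add_assoc, add_comm 1] using h

theorem two_mul_windowSum_le {S : ℕ → ℕ} {d s : ℕ} (hleft : S (s + 1) ≤ S s)
    (hright : S (s + d) ≤ S (s + d + 1)) :
    2 * windowSum S d (s + 1) ≤ windowSum S d s + windowSum S d (s + 2) := by
  have h₀ := windowSum_succ_add S d s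
  have h₁ := windowSum_succ_add S d (s + 1)
  rw [show s + 1 + d = s + d + 1 by omega, show s + 1 + 1 = s + 2 from rfl] at h₁
  omega

theorem le_max_of_two_mul_le_add {g : ℕ → ℕ} {a b : ℕ}
    (hg : ∀ t, a ≤ t → t + 2 ≤ b → 2 * g (t + 1) ≤ g t + g (t + 2)) {v : ℕ}
    (hav : a ≤ v) (hvb : v ≤ b) : g v ≤ max (g a) (g b) := by
  have rising : ∀ t w, a ≤ t → t ≤ w → w < b → g t ≤ g (t + 1) → g w ≤ g (w + 1) := by
    intro t w hat htw hwb ht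
    induction w, htw using Nat.le_induction with
    | base => exact ht
    | succ w htw ih =>
      have := hg w (by omega) (by omega)
      have := ih (by omega)
      show g (w + 1) ≤ g (w + 2)
      omega
  by_cases hrise : ∃ t, a ≤ t ∧ t < v ∧ g t ≤ g (t + 1)
  · obtain ⟨t, hat, htv, ht⟩ := hrise
    have mono : ∀ w, v ≤ w → w ≤ b → g v ≤ g w := by
      intro w hvw hwb
      induction w, hvw using Nat.le_induction with
      | base => exact le_rfl
      | succ w hvw ih => exact (ih (by omega)).trans (rising t w hat (by omega) (by omega) ht)
    exact le_max_of_le_right (mono b hvb le_rfl)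
  · push Not at hrise
    have anti : ∀ w, a ≤ w → w ≤ v → g w ≤ g a := by
      intro w haw hwv
      induction w, haw using Nat.le_induction with
      | base => exact le_rfl
      | succ w haw ih => exact (hrise w haw (by omega)).le.trans (ih (by omega))
    exact le_max_of_le_left (anti v hav le_rfl)

theorem exists_vertex_le {ι α β : Type*} [Fintype ι] [DecidableEq ι] [Preorder α]
    [LinearOrder β] {F : (ι → α) → β} {a b : α}
    (hF : ∀ x : ι → α, (∀ j, x j ∈ Set.Icc a b) →
      ∀ i, F x ≤ max (F (update x i a)) (F (update x i b)))
    (x : ι → α) (hx : ∀ j, x j ∈ Set.Icc a b) :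
    ∃ y : ι → α, (∀ j, y j = a ∨ y j = b) ∧ F x ≤ F y := by
  suffices ∀ s : Finset ι, ∀ x : ι → α, (∀ j, x j ∈ Set.Icc a b) →
      (∀ j ∉ s, x j = a ∨ x j = b) → ∃ y : ι → α, (∀ j, y j = a ∨ y j = b) ∧ F x ≤ F y from
    this univ x hx (by simp)
  intro s
  induction s using Finset.induction_on with
  | empty => exact fun x _ hx => ⟨x, fun j => hx j (notMem_empty j), le_rfl⟩
  | insert i s _ ih =>
    intro x hx hxs
    have hab : a ≤ b := (hx i).1.trans (hx i).2
    have hupd : ∀ c, c = a ∨ c = b → ∃ y : ι → α, (∀ j, y j = a ∨ y j = b) ∧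
        F (update x i c) ≤ F y := by
      intro c hc
      refine ih _ (fun j => ?_) (fun j hj => ?_)
      · rcases eq_or_ne j i with rfl | hji
        · rcases hc with rfl | rfl <;> simp [hab]
        · simpa [hji] using hx j
      · rcases eq_or_ne j i with rfl | hji
        · simpa using hc
        · simpa [hji] using hxs j (by simp [hji, hj])
    obtain ⟨y₁, hy₁, h₁⟩ := hupd a (Or.inl rfl)
    obtain ⟨y₂, hy₂, h₂⟩ := hupd b (Or.inr rfl)
    have hle := (hF x hx i).trans (max_le_max h₁ h₂)
    rcases le_total (F y₁) (F y₂) with h | h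
    · exact ⟨y₂, hy₂, hle.trans (max_le h le_rfl)⟩
    · exact ⟨y₁, hy₁, hle.trans (max_le le_rfl h)⟩

namespace Nat

theorem mul_le_half_mul_half (u v : ℕ) : u * v ≤ (u + v) / 2 * ((u + v + 1) / 2) := by
  obtain ⟨q, hq | hq⟩ := Nat.even_or_odd' (u + v)
  · rw [hq, show 2 * q / 2 = q by omega, show (2 * q + 1) / 2 = q by omega]
    nlinarith [sq_nonneg ((u : ℤ) - v)]
  · rw [hq, show (2 * q + 1) / 2 = q by omega, show (2 * q + 1 + 1) / 2 = q + 1 by omega]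
    nlinarith [sq_nonneg ((u : ℤ) - v)]

theorem sub_mul_sub_le_half_mul_half (a b k : ℕ) :
    (a - k) * (b - k) ≤ ((a + b) / 2 - k) * ((a + b + 1) / 2 - k) := by
  rcases le_or_gt a k with ha | ha
  · simp [Nat.sub_eq_zero_of_le ha]
  rcases le_or_gt b k with hb | hb
  · simp [Nat.sub_eq_zero_of_le hb]
  calc (a - k) * (b - k) ≤ (a - k + (b - k)) / 2 * ((a - k + (b - k) + 1) / 2) :=
        mul_le_half_mul_half _ _
    _ = _ := by congr 1 <;> omega

theorem descFactorial_mul_descFactorial_le {a b n : ℕ} (h : a + b = n) (r : ℕ) :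
    a.descFactorial r * b.descFactorial r ≤
      (n / 2).descFactorial r * ((n + 1) / 2).descFactorial r := by
  subst h
  simp only [Nat.descFactorial_eq_prod_range, ← prod_mul_distrib]
  exact prod_le_prod' fun k _ => sub_mul_sub_le_half_mul_half a b k

theorem factorial_mul_descFactorial_mul_descFactorial (k r : ℕ) :
    k ! * (k / 2 + r).descFactorial r * ((k + 1) / 2 + r).descFactorial r =
      k.choose (k / 2) * (k / 2 + r)! * ((k + 1) / 2 + r)! := by
  have h₁ := Nat.factorial_mul_descFactorial (n := k / 2 + r) (k := r) (by omega)
  have h₂ := Nat.factorial_mul_descFactorial (n := (k + 1) / 2 + r) (k := r) (by omega)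
  have h₃ := Nat.choose_mul_factorial_mul_factorial (Nat.div_le_self k 2)
  rw [Nat.add_sub_cancel] at h₁ h₂
  rw [show k - k / 2 = (k + 1) / 2 by omega] at h₃
  rw [← h₁, ← h₂, ← h₃]
  ring

end Nat

section ConfMatrix

variable {n d : ℕ}

theorem permanent_confMatrix_update (x : Fin n → ℕ) (i : Fin n) {v : ℕ} (hv : 1 ≤ v)
    (hvn : v + d ≤ n + 1) :
    permanent (confMatrix n d (update x i v)) =
      windowSum (completionsAt (confMatrix n d x) i) d (v - 1) := by
  rw [permanent_eq_sum_mul_completionsAt _ i, completionsAt_congr (B := confMatrix n d x)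
    fun j hj => by ext c; simp [confMatrix, update_of_ne hj]]
  set S := completionsAt (confMatrix n d x) i
  have hwindow : {m ∈ range n | v ≤ m + 1 ∧ m + 1 ≤ v + d - 1} = Ico (v - 1) (v - 1 + d) := by
    ext m
    simp only [mem_filter, mem_range, mem_Ico]
    omega
  simp only [confMatrix, update_self, ite_mul, one_mul, zero_mul]
  rw [Fin.sum_univ_eq_sum_range (fun m => if v ≤ m + 1 ∧ m + 1 ≤ v + d - 1 then S m else 0),
    sum_ite, sum_const_zero, add_zero, hwindow, sum_Ico_eq_sum_range, Nat.add_sub_cancel_left,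
    windowSum]

theorem completionsAt_confMatrix_succ_le (x : Fin n → ℕ) (i : Fin n) {m : ℕ}
    (hx : ∀ j, 1 ≤ x j) (hm : m + 2 ≤ d) (hmn : m + 1 < n) :
    completionsAt (confMatrix n d x) i (m + 1) ≤ completionsAt (confMatrix n d x) i m :=
  completionsAt_le_of_col_le _ i (c := ⟨m, by omega⟩) (c' := ⟨m + 1, hmn⟩) fun j _ => by
    have := hx j
    simp only [confMatrix]
    split_ifs <;> omega

theorem completionsAt_confMatrix_le_succ (x : Fin n → ℕ) (i : Fin n) {m : ℕ}
    (hx : ∀ j, x j ≤ m + 1) (hmn : m + 1 < n) :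
    completionsAt (confMatrix n d x) i m ≤ completionsAt (confMatrix n d x) i (m + 1) :=
  completionsAt_le_of_col_le _ i (c := ⟨m + 1, hmn⟩) (c' := ⟨m, by omega⟩) fun j _ => by
    have := hx j
    simp only [confMatrix]
    split_ifs <;> omega

end ConfMatrix

theorem permanent_confMatrix_le_max_update {d r : ℕ} (hrd : r ≤ d) (x : Fin (d + r) → ℕ)
    (hx : ∀ j, x j ∈ Set.Icc 1 (r + 1)) (i : Fin (d + r)) :
    permanent (confMatrix (d + r) d x) ≤
      max (permanent (confMatrix (d + r) d (update x i 1)))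
        (permanent (confMatrix (d + r) d (update x i (r + 1)))) := by
  set S := completionsAt (confMatrix (d + r) d x) i
  have hper : ∀ v ∈ Set.Icc 1 (r + 1),
      permanent (confMatrix (d + r) d (update x i v)) = windowSum S d (v - 1) :=
    fun v hv => permanent_confMatrix_update x i hv.1 (by have := hv.2; omega)
  have hconv : ∀ s, 0 ≤ s → s + 2 ≤ r →
      2 * windowSum S d (s + 1) ≤ windowSum S d s + windowSum S d (s + 2) := fun s _ hs =>
    two_mul_windowSum_le
      (completionsAt_confMatrix_succ_le x i (fun j => (hx j).1) (by omega) (by omega))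
      (completionsAt_confMatrix_le_succ x i (fun j => by have := (hx j).2; omega) (by omega))
  have hxi := hper (x i) (hx i)
  rw [update_eq_self] at hxi
  rw [hxi, hper 1 ⟨le_rfl, by omega⟩, hper (r + 1) ⟨by omega, le_rfl⟩]
  simpa using le_max_of_two_mul_le_add hconv (Nat.zero_le _) (v := x i - 1)
    (by have := (hx i).2; omega)

theorem permanent_confMatrix_le_of_two_point {d r : ℕ} (hrd : r ≤ d) (x : Fin (d + r) → ℕ)
    (hx : ∀ j, x j = 1 ∨ x j = r + 1) :
    permanent (confMatrix (d + r) d x) ≤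
      (#{j | x j = 1}).descFactorial r * (#{j | x j ≠ 1}).descFactorial r * (d - r)! := by
  have hCL : #{c : Fin (d + r) | (c : ℕ) < r} = r := by simp [Fin.card_filter_val_lt]
  have hCR : #{c : Fin (d + r) | d ≤ (c : ℕ)} = r := by
    have h := card_filter_add_card_filter_not (s := univ) fun c : Fin (d + r) => (c : ℕ) < d
    simp only [Fin.card_filter_val_lt, not_lt, card_univ, Fintype.card_fin] at h
    omega
  have hdisj : Disjoint ({c | (c : ℕ) < r} : Finset (Fin (d + r)))
      ({c | d ≤ (c : ℕ)} : Finset (Fin (d + r))) :=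
    disjoint_filter.2 fun c _ h₁ h₂ => by omega
  refine (permanent_ite_eq_card _).trans_le <|
    (card_le_card_of_injOn (·⁻¹) (fun σ hσ => ?_) inv_injective.injOn).trans <|
      (Perm.card_mapsTo_le hdisj {j | x j = 1} {j | x j ≠ 1}).trans_eq ?_
  · simp only [coe_filter, mem_univ, true_and, mem_filter] at hσ ⊢
    -- only rows starting at `1` reach the first `r` columns, only rows starting at `r + 1` the
    -- last `r`
    refine ⟨fun c hc => ?_, fun c hc => ?_⟩ <;>
    · have hcov := hσ (σ⁻¹ c)
      rw [show σ (σ⁻¹ c) = c from σ.apply_symm_apply c] at hcov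
      have := hx (σ⁻¹ c)
      omega
  · rw [hCL, hCR, Fintype.card_fin, show d + r - r - r = d - r by omega]

theorem max_permanent_bound_general (d r : ℕ) (hrd : r ≤ d)
    (A : Matrix (Fin (d + r)) (Fin (d + r)) ℕ) (hA : IsGamma (d + r) d A) :
    permanent A ≤
      Nat.choose (d - r) ((d - r) / 2) * ((d + r) / 2).factorial *
        ((d + r + 1) / 2).factorial := by
  obtain ⟨x, hx, rfl⟩ := hA
  obtain ⟨y, hy, hxy⟩ := exists_vertex_le (F := fun x => permanent (confMatrix (d + r) d x))
    (fun x hx i => permanent_confMatrix_le_max_update hrd x hx i) x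
    (fun j => by have := hx j; simp only [Set.mem_Icc]; omega)
  have hcard : #{j | y j = 1} + #{j | y j ≠ 1} = d + r := by
    rw [card_filter_add_card_filter_not, card_univ, Fintype.card_fin]
  calc permanent (confMatrix (d + r) d x)
      ≤ (#{j | y j = 1}).descFactorial r * (#{j | y j ≠ 1}).descFactorial r * (d - r)! :=
        hxy.trans (permanent_confMatrix_le_of_two_point hrd y hy)
    _ ≤ ((d + r) / 2).descFactorial r * ((d + r + 1) / 2).descFactorial r * (d - r)! :=
        Nat.mul_le_mul_right _ (Nat.descFactorial_mul_descFactorial_le hcard r)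
    _ = _ := by
        rw [show (d + r) / 2 = (d - r) / 2 + r by omega,
          show (d + r + 1) / 2 = (d - r + 1) / 2 + r by omega,
          ← Nat.factorial_mul_descFactorial_mul_descFactorial]
        ring

/-- For `n = d + r` with `0 < r ≤ d`, every `A ∈ Γ_n^d` satisfies
`per(A) ≤ C(d-r, ⌊(d-r)/2⌋) · ⌊(d+r)/2⌋! · ⌈(d+r)/2⌉!`. -/
theorem max_permanent_bound (d r : ℕ) (hr : 0 < r) (hrd : r ≤ d)
    (A : Matrix (Fin (d + r)) (Fin (d + r)) ℕ) (hA : IsGamma (d + r) d A) :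
    permanent A ≤
      Nat.choose (d - r) ((d - r) / 2) * ((d + r) / 2).factorial *
        ((d + r + 1) / 2).factorial :=
  max_permanent_bound_general d r hrd A hA
end

section
/- For every integer k ≥ 3 there exists a real ε_k > 0 such that B(k,v) < k² − ε_k for every integer v satisfying 0 < v < k. -/
/-!
Write `d = D(k-1)`. Then `B(k,v) = C(k)^v · Q(v)` with `Q(t) = (k - t + t d)² - t d²`, and the
factorial identity `C(k)^k · d² = k/(k-1)` gives `B(k,0) = B(k,k) = k²`. Since `C(k)^v` is
log-linear in `v`, it suffices that `Q` is strictly log-convex at the integers of `[0,k]`,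
`Q(t)² < Q(t-1) Q(t+1)`: a nonnegative strictly log-convex sequence stays strictly below the
larger of its endpoint values, and finitely many strict inequalities give a uniform `ε`.

The defect `Q(t-1) Q(t+1) - Q(t)²` is a concave quadratic in `t`, so it is positive on `[0,k]`
once it is positive at `t = 0` and `t = k`; in terms of `y = (k-1)(d-1)` both endpoint values
are positive for `2/3 ≤ y ≤ 13/10`. Finally `d^(k-1)` lies in `[2, e]`, because
`2^n n! ≤ (n+1)^n ≤ e^n n!`, and this places `y` in that window.
-/

/-- `F(a,b) = (a!)^(b/a)`. -/
noncomputable def Ffun (a b : ℕ) : ℝ := (a.factorial : ℝ) ^ ((b : ℝ) / (a : ℝ))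

/-- `D(k) = F(k,1) / F(k-1,1)`. -/
noncomputable def Dfun (k : ℕ) : ℝ := Ffun k 1 / Ffun (k - 1) 1

/-- `C(k) = D(k) / D(k-1)`. -/
noncomputable def Cfun (k : ℕ) : ℝ := Dfun k / Dfun (k - 1)

/-- `B(k,v) = C(k)^v · ((k-v)² + 2v(k-v)·D(k-1) + v(v-1)·D(k-1)²)`. -/
noncomputable def Bfun (k v : ℕ) : ℝ :=
  Cfun k ^ v *
    (((k : ℝ) - (v : ℝ)) ^ 2 + 2 * (v : ℝ) * ((k : ℝ) - (v : ℝ)) * Dfun (k - 1) +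
      (v : ℝ) * ((v : ℝ) - 1) * Dfun (k - 1) ^ 2)

open Real
open scoped Nat

lemma Ffun_pos (a : ℕ) : 0 < Ffun a 1 :=
  rpow_pos_of_pos (mod_cast a.factorial_pos) _

lemma Ffun_pow (a : ℕ) : Ffun a 1 ^ a = a ! := by
  rcases eq_or_ne a 0 with rfl | ha
  · simp
  rw [Ffun, ← rpow_natCast, ← rpow_mul (by positivity), Nat.cast_one, one_div,
    inv_mul_cancel₀ (by exact_mod_cast ha), rpow_one]

lemma Dfun_pos (k : ℕ) : 0 < Dfun k := div_pos (Ffun_pos _) (Ffun_pos _)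

lemma Cfun_pos (k : ℕ) : 0 < Cfun k := div_pos (Dfun_pos _) (Dfun_pos _)

lemma Dfun_pow_mul_Ffun {j : ℕ} (hj : 1 ≤ j) : Dfun j ^ j * Ffun (j - 1) 1 = j := by
  obtain ⟨n, rfl⟩ := Nat.exists_eq_add_of_le' hj
  have hF := (Ffun_pos n).ne'
  rw [Dfun, add_tsub_cancel_right, div_pow, Ffun_pow, pow_succ, Ffun_pow, Nat.factorial_succ]
  push_cast
  field_simp

lemma Cfun_pow_mul_Dfun_sq {k : ℕ} (hk : 2 ≤ k) :
    Cfun k ^ k * Dfun (k - 1) ^ 2 = k / (k - 1) := by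
  obtain ⟨j, rfl⟩ := Nat.exists_eq_add_of_le' (show 1 ≤ k from by omega)
  have h0 := (Ffun_pos j).ne'
  have h1 := (Ffun_pos (j - 1)).ne'
  have hj : (j : ℝ) ≠ 0 := Nat.cast_ne_zero.2 (by omega)
  have hk := eq_div_of_mul_eq h0 (Dfun_pow_mul_Ffun (j := j + 1) (by omega))
  have hj' := eq_div_of_mul_eq h1 (Dfun_pow_mul_Ffun (j := j) (by omega))
  rw [Cfun, add_tsub_cancel_right, div_pow, pow_succ (Dfun j) j, hk, hj',
    show Dfun j = Ffun j 1 / Ffun (j - 1) 1 from rfl, Nat.cast_succ, add_sub_cancel_right]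
  field_simp

lemma one_add_mul_add_le_pow {a : ℝ} (ha : 0 ≤ a) (n : ℕ) :
    1 + n * a + n * (n - 1) / 2 * a ^ 2 ≤ (1 + a) ^ n := by
  induction n with
  | zero => simp
  | succ n ih =>
    have hn : (0 : ℝ) ≤ n * (n - 1) := by
      rcases n with _ | m
      · simp
      · push_cast; nlinarith [(m.cast_nonneg : (0 : ℝ) ≤ m)]
    rw [pow_succ (1 + a)]
    push_cast
    nlinarith [mul_le_mul_of_nonneg_right ih (by linarith : (0:ℝ) ≤ 1 + a),
      mul_nonneg (mul_nonneg hn (sq_nonneg a)) ha]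

lemma add_one_pow_eq_one_add_inv_pow_mul {x : ℝ} (hx : x ≠ 0) (m : ℕ) :
    (x + 1) ^ m = (1 + x⁻¹) ^ m * x ^ m := by
  rw [← mul_pow, add_mul, inv_mul_cancel₀ hx, one_mul, add_comm]

lemma two_pow_mul_factorial_le (n : ℕ) : (2 : ℝ) ^ n * n ! ≤ ((n : ℝ) + 1) ^ n := by
  induction n with
  | zero => simp
  | succ n ih =>
    have hx : (n : ℝ) + 1 ≠ 0 := by positivity
    have hbern : 2 ≤ (1 + ((n : ℝ) + 1)⁻¹) ^ (n + 1) := by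
      have := one_add_mul_le_pow (a := ((n : ℝ) + 1)⁻¹)
        (by linarith [show (0 : ℝ) ≤ ((n : ℝ) + 1)⁻¹ by positivity]) (n + 1)
      rwa [Nat.cast_succ, mul_inv_cancel₀ hx, one_add_one_eq_two] at this
    push_cast [Nat.factorial_succ]
    rw [add_one_pow_eq_one_add_inv_pow_mul hx]
    calc (2 : ℝ) ^ (n + 1) * ((n + 1) * n !) = 2 * (n + 1) * (2 ^ n * n !) := by ring
      _ ≤ 2 * (n + 1) * (n + 1) ^ n := by gcongr
      _ = 2 * (n + 1) ^ (n + 1) := by ring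
      _ ≤ _ := by gcongr

lemma succ_pow_le_exp_mul_factorial (n : ℕ) : ((n : ℝ) + 1) ^ n ≤ exp 1 ^ n * n ! := by
  induction n with
  | zero => simp
  | succ n ih =>
    have hx : (n : ℝ) + 1 ≠ 0 := by positivity
    have he : (1 + ((n : ℝ) + 1)⁻¹) ^ (n + 1) ≤ exp 1 := by
      exact_mod_cast one_add_inv_pow_le_exp (n := n + 1)
    push_cast [Nat.factorial_succ]
    rw [add_one_pow_eq_one_add_inv_pow_mul hx]
    calc (1 + ((n : ℝ) + 1)⁻¹) ^ (n + 1) * ((n : ℝ) + 1) ^ (n + 1)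
        ≤ exp 1 * (n + 1) ^ (n + 1) := by gcongr
      _ = exp 1 * ((n + 1) * (n + 1) ^ n) := by ring
      _ ≤ exp 1 * ((n + 1) * (exp 1 ^ n * n !)) := by gcongr
      _ = exp 1 ^ (n + 1) * ((n + 1) * n !) := by ring

lemma Dfun_pow_self_mem_Icc {j : ℕ} (hj : 2 ≤ j) : Dfun j ^ j ∈ Set.Icc 2 (exp 1) := by
  obtain ⟨n, rfl⟩ := Nat.exists_eq_add_of_le' (show 1 ≤ j from by omega)
  have hn : n ≠ 0 := by omega
  have hpow : (Dfun (n + 1) ^ (n + 1)) ^ n * n ! = ((n : ℝ) + 1) ^ n := by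
    have h := Dfun_pow_mul_Ffun (j := n + 1) (by omega)
    rw [add_tsub_cancel_right] at h
    rw [← Ffun_pow, ← mul_pow, h]
    push_cast; rfl
  have hfac : (0 : ℝ) < n ! := by positivity
  have hD : 0 ≤ Dfun (n + 1) ^ (n + 1) := by positivity [Dfun_pos (n + 1)]
  constructor
  · refine le_of_pow_le_pow_left₀ hn hD (le_of_mul_le_mul_right ?_ hfac)
    rw [hpow]; exact two_pow_mul_factorial_le n
  · refine le_of_pow_le_pow_left₀ hn (exp_pos 1).le (le_of_mul_le_mul_right ?_ hfac)
    rw [hpow]; exact succ_pow_le_exp_mul_factorial n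

lemma mul_Dfun_sub_one_mem_Icc {j : ℕ} (hj : 2 ≤ j) :
    (j : ℝ) * (Dfun j - 1) ∈ Set.Icc (2 / 3) (13 / 10) := by
  obtain ⟨hlo, hhi⟩ := Dfun_pow_self_mem_Icc hj
  have hjR : (2 : ℝ) ≤ j := by exact_mod_cast hj
  have hlog : log 2 ≤ j * (Dfun j - 1) := by
    rw [log_le_iff_le_exp two_pos, exp_nat_mul]
    calc 2 ≤ Dfun j ^ j := hlo
      _ ≤ exp (Dfun j - 1) ^ j := by
        gcongr
        · exact (Dfun_pos j).le
        · linarith [add_one_le_exp (Dfun j - 1)]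
  have hy : 2 / 3 ≤ j * (Dfun j - 1) := by linarith [log_two_gt_d9]
  refine ⟨hy, ?_⟩
  have ha : 0 ≤ Dfun j - 1 := by nlinarith
  -- with y = j (d - 1): 1 + y + y² / 4 ≤ d ^ j ≤ e < 1 + 1.3 + 1.3² / 4
  have hbern := one_add_mul_add_le_pow ha j
  rw [add_sub_cancel] at hbern
  nlinarith [exp_one_lt_d9,
    mul_nonneg (mul_nonneg (Nat.cast_nonneg j) (sub_nonneg.2 hjR)) (sq_nonneg (Dfun j - 1))]

noncomputable def Qfun (k d t : ℝ) : ℝ := (k - t + t * d) ^ 2 - t * d ^ 2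

noncomputable def Qdefect (k d t : ℝ) : ℝ := Qfun k d (t - 1) * Qfun k d (t + 1) - Qfun k d t ^ 2

section Qdefect

variable {k d : ℝ}

-- The defect is a quadratic in `t` with leading coefficient `-2 (d - 1) ^ 4`, hence concave.
lemma mul_Qdefect_eq (t : ℝ) :
    k * Qdefect k d t =
      (k - t) * Qdefect k d 0 + t * Qdefect k d k + 2 * (d - 1) ^ 4 * t * (k - t) * k := by
  simp only [Qdefect, Qfun]; ring

lemma Qdefect_zero_pos (hk : 1 < k) (hlo : 2 / 3 ≤ (k - 1) * (d - 1))
    (hhi : (k - 1) * (d - 1) ≤ 13 / 10) : 0 < Qdefect k d 0 := by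
  set y := (k - 1) * (d - 1) with hy
  have ha : 0 ≤ d - 1 := by nlinarith
  have h : Qdefect k d 0 =
      (1 - 2 * (y - 1) ^ 2) + 4 * y * (d - 1) + 2 * (d - 1) ^ 2 + 2 * (2 * y - 1) * (d - 1) ^ 2 := by
    simp only [Qdefect, Qfun, hy]; ring
  rw [h]
  nlinarith [mul_nonneg (by linarith : (0 : ℝ) ≤ 2 * y - 1) (sq_nonneg (d - 1))]

lemma Qdefect_self_pos (hk : 3 ≤ k) (hlo : 2 / 3 ≤ (k - 1) * (d - 1))
    (hhi : (k - 1) * (d - 1) ≤ 13 / 10) : 0 < Qdefect k d k := by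
  set y := (k - 1) * (d - 1) with hy
  have ha : 0 ≤ d - 1 := by nlinarith
  have hay : 2 * (d - 1) ≤ y := by nlinarith
  have h : Qdefect k d k =
      d ^ 2 * (1 - 2 * (y - 1) ^ 2 + 2 * (d - 1) * (1 - y) - (d - 1) ^ 2) + (d - 1) ^ 4 := by
    simp only [Qdefect, Qfun, hy]; ring
  have hinner : 0 < 1 - 2 * (y - 1) ^ 2 + 2 * (d - 1) * (1 - y) - (d - 1) ^ 2 := by
    nlinarith [mul_nonneg ha (sub_nonneg.2 hay), mul_nonneg (sub_nonneg.2 hlo) (sub_nonneg.2 hhi)]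
  rw [h]
  have : 0 < d := by linarith
  positivity

lemma Qdefect_pos (hk : 3 ≤ k) (hlo : 2 / 3 ≤ (k - 1) * (d - 1))
    (hhi : (k - 1) * (d - 1) ≤ 13 / 10) {t : ℝ} (ht0 : 0 ≤ t) (htk : t ≤ k) :
    0 < Qdefect k d t := by
  have h0 := Qdefect_zero_pos (by linarith) hlo hhi
  have hk' := Qdefect_self_pos hk hlo hhi
  have hrem : 0 ≤ 2 * (d - 1) ^ 4 * t * (k - t) * k := by
    have : 0 ≤ k - t := by linarith
    have : 0 ≤ k := by linarith
    positivity
  have hsum : 0 < (k - t) * Qdefect k d 0 + t * Qdefect k d k := by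
    rcases eq_or_lt_of_le htk with rfl | hlt
    · nlinarith
    · nlinarith [mul_pos (sub_pos.2 hlt) h0, mul_nonneg ht0 hk'.le]
  have := mul_Qdefect_eq (k := k) (d := d) t
  exact pos_of_mul_pos_right (show 0 < k * Qdefect k d t by linarith) (by linarith)

end Qdefect

lemma lt_max_endpoints_of_sq_lt_mul {b : ℕ → ℝ} {k : ℕ} (hb : ∀ i ≤ k, 0 ≤ b i)
    (hb_conv : ∀ i, i + 2 ≤ k → b (i + 1) ^ 2 < b i * b (i + 2)) {v : ℕ} (hv0 : 0 < v)
    (hvk : v < k) : b v < max (b 0) (b k) := by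
  obtain ⟨m, hm, hmax⟩ := (Finset.range (k + 1)).exists_max_image b ⟨0, by simp⟩
  have hinterior : ∀ j, 0 < j → j < k → b j < b m := by
    intro j hj0 hjk
    by_contra! hj
    have hprev := (hmax (j - 1) (by simp; omega)).trans hj
    have hnext := (hmax (j + 1) (by simp; omega)).trans hj
    have hconv := hb_conv (j - 1) (by omega)
    rw [show j - 1 + 1 = j by omega, show j - 1 + 2 = j + 1 by omega] at hconv
    nlinarith [mul_le_mul hprev hnext (hb _ (by omega)) (hb j (by omega))]
  have hm_end : m = 0 ∨ m = k := by
    by_contra! h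
    exact lt_irrefl _ (hinterior m (by omega) (by simp at hm; omega))
  calc b v < b m := hinterior v hv0 hvk
    _ ≤ max (b 0) (b k) := by rcases hm_end with rfl | rfl <;> simp

lemma Bfun_eq (k v : ℕ) : Bfun k v = Cfun k ^ v * Qfun k (Dfun (k - 1)) v := by
  simp only [Bfun, Qfun]; ring

lemma Bfun_zero (k : ℕ) : Bfun k 0 = (k : ℝ) ^ 2 := by
  simp [Bfun]

lemma Bfun_self {k : ℕ} (hk : 2 ≤ k) : Bfun k k = (k : ℝ) ^ 2 := by
  have hk1 : (k : ℝ) - 1 ≠ 0 := by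
    have : (2 : ℝ) ≤ k := by exact_mod_cast hk
    linarith
  rw [Bfun, sub_self]
  calc Cfun k ^ k * (0 ^ 2 + 2 * k * 0 * Dfun (k - 1) + k * (k - 1) * Dfun (k - 1) ^ 2)
      = Cfun k ^ k * Dfun (k - 1) ^ 2 * (k * (k - 1)) := by ring
    _ = (k : ℝ) ^ 2 := by rw [Cfun_pow_mul_Dfun_sq hk]; field_simp

lemma Bfun_nonneg {k v : ℕ} (hv : v ≤ k) : 0 ≤ Bfun k v := by
  have hvk : (0 : ℝ) ≤ k - v := sub_nonneg.2 (by exact_mod_cast hv)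
  have hv1 : (0 : ℝ) ≤ v * (v - 1) := by
    rcases v with _ | v
    · simp
    · push_cast; nlinarith [(v.cast_nonneg : (0 : ℝ) ≤ v)]
  have := Cfun_pos k
  have := Dfun_pos (k - 1)
  unfold Bfun
  positivity

lemma Bfun_sq_lt_mul {k i : ℕ} (hk : 3 ≤ k) (hi : i + 2 ≤ k) :
    Bfun k (i + 1) ^ 2 < Bfun k i * Bfun k (i + 2) := by
  obtain ⟨hlo, hhi⟩ := mul_Dfun_sub_one_mem_Icc (j := k - 1) (by omega)
  rw [Nat.cast_pred (by omega)] at hlo hhi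
  have hkR : (3 : ℝ) ≤ k := by exact_mod_cast hk
  have hiR : (i : ℝ) + 2 ≤ k := by exact_mod_cast hi
  have hQ := Qdefect_pos hkR hlo hhi (t := i + 1) (by positivity) (by linarith)
  rw [Qdefect, add_sub_cancel_right, add_assoc, one_add_one_eq_two, sub_pos] at hQ
  have hC : 0 < Cfun k ^ (2 * i + 2) := pow_pos (Cfun_pos k) _
  simp only [Bfun_eq]
  push_cast
  calc (Cfun k ^ (i + 1) * Qfun k (Dfun (k - 1)) (i + 1)) ^ 2
      = Cfun k ^ (2 * i + 2) * Qfun k (Dfun (k - 1)) (i + 1) ^ 2 := by ring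
    _ < Cfun k ^ (2 * i + 2) * (Qfun k (Dfun (k - 1)) i * Qfun k (Dfun (k - 1)) (i + 2)) := by
      gcongr
    _ = _ := by ring

lemma Bfun_lt_sq {k v : ℕ} (hk : 3 ≤ k) (hv0 : 0 < v) (hvk : v < k) : Bfun k v < (k : ℝ) ^ 2 := by
  have h := lt_max_endpoints_of_sq_lt_mul (fun i hi => Bfun_nonneg hi)
    (fun i hi => Bfun_sq_lt_mul hk hi) hv0 hvk
  rwa [Bfun_zero, Bfun_self (by omega), max_self] at h

/-- For every integer `k ≥ 3` there exists `ε_k > 0` such that `B(k,v) < k² - ε_k`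
for every integer `v` with `0 < v < k`. -/
theorem wanless_lemma (k : ℕ) (hk : 3 ≤ k) :
    ∃ ε : ℝ, 0 < ε ∧ ∀ v : ℕ, 0 < v → v < k → Bfun k v < (k : ℝ) ^ 2 - ε := by
  have hne : (Finset.Ioo 0 k).Nonempty := ⟨1, Finset.mem_Ioo.2 ⟨one_pos, by omega⟩⟩
  set M := (Finset.Ioo 0 k).sup' hne (Bfun k)
  have hM : M < (k : ℝ) ^ 2 := (Finset.sup'_lt_iff hne).2 fun v hv =>
    Bfun_lt_sq hk (Finset.mem_Ioo.1 hv).1 (Finset.mem_Ioo.1 hv).2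
  refine ⟨((k : ℝ) ^ 2 - M) / 2, by linarith, fun v hv0 hvk => ?_⟩
  have : Bfun k v ≤ M := Finset.le_sup' (Bfun k) (Finset.mem_Ioo.2 ⟨hv0, hvk⟩)
  linarith
end

section
/- For every two integers a, b satisfying b ≥ a + 2 > 3, the inequality (a!)^{1/a} · (b!)^{1/b} < ((a+1)!)^{1/(a+1)} · ((b−1)!)^{1/(b−1)} holds, where the powers are real powers. -/
open Finset Real

lemma prod_sub (n : ℕ) : ∏ k ∈ Finset.range n, (n - k) = n.factorial := by
  induction n with
  | zero => simp
  | succ n ih =>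
      rw [Finset.prod_range_succ']
      simp only [Nat.succ_sub_succ]
      rw [ih, Nat.sub_zero, Nat.factorial_succ, mul_comm]

lemma sq_fact_le (n : ℕ) : 4 ^ n * n.factorial ^ 2 ≤ (n + 1) ^ (2 * n) := by
  calc 4 ^ n * n.factorial ^ 2
      = ∏ k ∈ Finset.range n, (4 * ((k + 1) * (n - k))) := by
        rw [Finset.prod_mul_distrib, Finset.prod_mul_distrib, Finset.prod_const,
          Finset.prod_range_add_one_eq_factorial, prod_sub, Finset.card_range, sq]
    _ ≤ ∏ k ∈ Finset.range n, (n + 1) ^ 2 := by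
        apply Finset.prod_le_prod (by intro i _; positivity)
        intro k hk
        rw [Finset.mem_range] at hk
        zify [hk.le]
        nlinarith [sq_nonneg ((k:ℤ) + 1 - ((n:ℤ) - k))]
    _ = (n + 1) ^ (2 * n) := by rw [Finset.prod_const, Finset.card_range, ← pow_mul, mul_comm]

/-- `2 log n! ≤ 2n log(n+1) - n log 4`. -/
lemma log_fact_le (n : ℕ) :
    (n : ℝ) * Real.log 4 + 2 * Real.log n.factorial ≤ 2 * n * Real.log (n + 1) := by
  have h := sq_fact_le n
  have h' : (4 : ℝ) ^ n * (n.factorial : ℝ) ^ 2 ≤ ((n : ℝ) + 1) ^ (2 * n) := by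
    exact_mod_cast h
  have h0 : (0 : ℝ) < 4 ^ n * (n.factorial : ℝ) ^ 2 := by positivity
  have := Real.log_le_log h0 h'
  rw [Real.log_mul (by positivity) (by positivity), Real.log_pow, Real.log_pow] at this
  have hf : (0:ℝ) < n.factorial := by exact_mod_cast n.factorial_pos
  rw [Real.log_pow] at this
  push_cast at this ⊢
  linarith

lemma key (n : ℕ) (hn : 1 ≤ n) :
    (n : ℝ) * (n + 1) * Real.log (n + 2) + 2 * Real.log n.factorial
      < (n : ℝ) * (n + 3) * Real.log (n + 1) := by
  have hN : (1:ℝ) ≤ n := by exact_mod_cast hn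
  have h1 : ((n:ℝ) + 1) * (Real.log (n + 2) - Real.log (n + 1)) ≤ 1 := by
    have hpos : (0:ℝ) < (n:ℝ) + 1 := by linarith
    rw [← Real.log_div (by positivity) (by positivity)]
    have : Real.log (((n:ℝ) + 2) / ((n:ℝ) + 1)) ≤ ((n:ℝ) + 2) / ((n:ℝ) + 1) - 1 :=
      Real.log_le_sub_one_of_pos (by positivity)
    have h2 : ((n:ℝ) + 2) / ((n:ℝ) + 1) - 1 = 1 / ((n:ℝ) + 1) := by
      field_simp
      norm_num
    rw [h2] at this
    calc ((n:ℝ) + 1) * Real.log (((n:ℝ) + 2) / ((n:ℝ) + 1))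
        ≤ ((n:ℝ) + 1) * (1 / ((n:ℝ) + 1)) := by
          exact mul_le_mul_of_nonneg_left this (by linarith)
      _ = 1 := by field_simp
  have h4 : (1:ℝ) < Real.log 4 := by
    rw [Real.lt_log_iff_exp_lt (by norm_num)]
    calc Real.exp 1 < 2.7182818286 := Real.exp_one_lt_d9
      _ < 4 := by norm_num
  have h3 := log_fact_le n
  nlinarith [h1, h3, h4, hN]

noncomputable def L (n : ℕ) : ℝ := Real.log n.factorial / n

lemma D_lt (n : ℕ) (hn : 1 ≤ n) : L (n + 2) - L (n + 1) < L (n + 1) - L n := by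
  have hN : (1:ℝ) ≤ n := by exact_mod_cast hn
  have hf : (0:ℝ) < n.factorial := by exact_mod_cast n.factorial_pos
  have e1 : Real.log ((n + 1).factorial) = Real.log n.factorial + Real.log ((n:ℝ) + 1) := by
    rw [Nat.factorial_succ]
    push_cast
    rw [Real.log_mul (by linarith) (ne_of_gt hf), add_comm]
  have e2 : Real.log ((n + 2).factorial)
      = Real.log n.factorial + Real.log ((n:ℝ) + 1) + Real.log ((n:ℝ) + 2) := by
    rw [show n + 2 = (n + 1) + 1 by ring, Nat.factorial_succ]
    push_cast
    rw [Real.log_mul (by linarith) (by positivity), e1]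
    push_cast
    ring
  set x := Real.log n.factorial
  set p := Real.log ((n:ℝ) + 1)
  set q := Real.log ((n:ℝ) + 2)
  have hk := key n hn
  unfold L
  rw [e1, e2]
  push_cast
  rw [div_sub_div _ _ (by linarith : (n:ℝ) + 2 ≠ 0) (by linarith : (n:ℝ) + 1 ≠ 0),
    div_sub_div _ _ (by linarith : (n:ℝ) + 1 ≠ 0) (by linarith : (n:ℝ) ≠ 0),
    div_lt_div_iff₀ (by nlinarith) (by nlinarith)]
  nlinarith [mul_lt_mul_of_pos_right hk (show (0:ℝ) < (n:ℝ) + 1 by linarith)]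

lemma D_anti (m k : ℕ) (hm : 1 ≤ m) (hmk : m < k) :
    L (k + 1) - L k < L (m + 1) - L m := by
  induction k, hmk using Nat.le_induction with
  | base => exact D_lt m hm
  | succ k hk ih =>
      calc L (k + 2) - L (k + 1) < L (k + 1) - L k := D_lt k (by omega)
        _ < L (m + 1) - L m := ih

/-- For integers `a, b` with `b ≥ a + 2 > 3`,
`(a!)^(1/a) · (b!)^(1/b) < ((a+1)!)^(1/(a+1)) · ((b-1)!)^(1/(b-1))`. -/
theorem factorial_root_inequality (a b : ℕ) (hab : a + 2 ≤ b) (ha : 3 < a + 2) :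
    (a.factorial : ℝ) ^ ((1 : ℝ) / a) * (b.factorial : ℝ) ^ ((1 : ℝ) / b) <
      ((a + 1).factorial : ℝ) ^ ((1 : ℝ) / (a + 1)) *
        ((b - 1).factorial : ℝ) ^ ((1 : ℝ) / (b - 1)) := by
  have ha2 : 2 ≤ a := by omega
  have hb4 : 4 ≤ b := by omega
  have rp : ∀ m : ℕ, (m.factorial : ℝ) ^ ((1 : ℝ) / (m : ℝ)) = Real.exp (L m) := by
    intro m
    rw [Real.rpow_def_of_pos (by exact_mod_cast m.factorial_pos), mul_one_div]
    rfl
  have hcast1 : ((a : ℝ) + 1) = ((a + 1 : ℕ) : ℝ) := by push_cast; ring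
  have hcast2 : ((b : ℝ) - 1) = ((b - 1 : ℕ) : ℝ) := by
    have : 1 ≤ b := by omega
    push_cast [this]
    ring
  rw [hcast1, hcast2, rp a, rp b, rp (a + 1), rp (b - 1), ← Real.exp_add, ← Real.exp_add,
    Real.exp_lt_exp]
  have hb1 : b - 1 + 1 = b := by omega
  have := D_anti a (b - 1) (by omega) (by omega)
  rw [hb1] at this
  linarith
end

section
/- Let 1 ≤ d ≤ n be integers and let B = (b_{i,j}) ∈ Γ_n^d satisfy b_{i,i} = 1 for all i, and assume B does not contain 1_{d×d} as a sub-matrix. For every index i with i + 2d − 1 ≤ n, let W = {i, i+1, …, i+2d−1} be the corresponding set of 2d contiguous columns. Then either there exists a column j ∈ W whose column sum ∑_k b_{k,j} is not equal to d, or there exist two distinct rows x, y such that, writing N(v) = {j : b_{v,j} = 1}: (1) 0 < |N(x) ∩ N(y)| < |N(x)| = d; (2) every column j ∈ N(x) ∪ N(y) has column sum exactly d; and (3) N(x) ⊆ W and N(y) ⊆ W. -/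
/-- `B` contains the all-ones `d × d` matrix as a sub-matrix: there are `d` rows and
`d` columns whose intersection entries are all `1`. -/
def ContainsAllOnes (d : ℕ) {n : ℕ} (B : Matrix (Fin n) (Fin n) ℕ) : Prop :=
  ∃ R S : Finset (Fin n), R.card = d ∧ S.card = d ∧ ∀ i ∈ R, ∀ j ∈ S, B i j = 1

/-- `N(v)`: the set of columns in which row `v` has a `1` (the neighbours of the row
vertex `v` in the bipartite graph of `B`). -/
def Nbr {n : ℕ} (B : Matrix (Fin n) (Fin n) ℕ) (v : Fin n) : Finset (Fin n) :=
  Finset.univ.filter fun j => B v j = 1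


lemma confMatrix_eq_one_iff (n d : ℕ) (x : Fin n → ℕ) (i j : Fin n) :
    confMatrix n d x i j = 1 ↔ (x i ≤ (j:ℕ) + 1 ∧ (j:ℕ) + 1 ≤ x i + d - 1) := by
  unfold confMatrix; split <;> simp_all

lemma nbr_card (n d : ℕ) (hd : 1 ≤ d) (hdn : d ≤ n) (f : Fin n → ℕ)
    (hf : ValidConf n d f) (v : Fin n) :
    (Nbr (confMatrix n d f) v).card = d := by
  have h1 := (hf v).1
  have h2 := (hf v).2
  have hn : 1 ≤ n := le_trans hd hdn
  have hlo : f v - 1 < n := by omega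
  have hhi : f v + d - 2 < n := by omega
  have heq : Nbr (confMatrix n d f) v = Finset.Icc ⟨f v - 1, hlo⟩ ⟨f v + d - 2, hhi⟩ := by
    ext j
    simp only [Nbr, Finset.mem_filter, Finset.mem_univ, true_and,
      confMatrix_eq_one_iff, Finset.mem_Icc, Fin.le_def]
    omega
  rw [heq, Fin.card_Icc]
  simp only []
  omega

lemma col_sum_eq_card (n d : ℕ) (f : Fin n → ℕ) (j : Fin n) :
    (∑ k, confMatrix n d f k j) =
      (Finset.univ.filter fun k => confMatrix n d f k j = 1).card := by
  rw [Finset.card_filter]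
  refine Finset.sum_congr rfl fun k _ => ?_
  unfold confMatrix
  split <;> simp

/-- Let `B ∈ Γ_n^d` have all diagonal entries equal to `1` and not contain `1_{d×d}` as a
sub-matrix.  For every window `W` of `2d` contiguous columns (0-indexed: columns `j` with
`i₀ ≤ j < i₀ + 2d`), either some column of `W` has column sum different from `d`, or there
are two distinct rows `x, y` such that (1) `0 < |N(x) ∩ N(y)| < |N(x)| = d`;
(2) every column in `N(x) ∪ N(y)` has column sum exactly `d`; (3) `N(x), N(y) ⊆ W`. -/
theorem window_lemma (n d : ℕ) (hd : 1 ≤ d) (hdn : d ≤ n)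
    (B : Matrix (Fin n) (Fin n) ℕ) (hB : IsGamma n d B)
    (hdiag : ∀ i, B i i = 1) (hno : ¬ ContainsAllOnes d B)
    (i₀ : ℕ) (hi : i₀ + 2 * d ≤ n) :
    (∃ j : Fin n, i₀ ≤ (j : ℕ) ∧ (j : ℕ) < i₀ + 2 * d ∧ (∑ k, B k j) ≠ d) ∨
    ∃ x y : Fin n, x ≠ y ∧
      0 < (Nbr B x ∩ Nbr B y).card ∧
      (Nbr B x ∩ Nbr B y).card < (Nbr B x).card ∧
      (Nbr B x).card = d ∧
      (∀ j ∈ Nbr B x ∪ Nbr B y, (∑ k, B k j) = d) ∧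
      (∀ j ∈ Nbr B x, i₀ ≤ (j : ℕ) ∧ (j : ℕ) < i₀ + 2 * d) ∧
      (∀ j ∈ Nbr B y, i₀ ≤ (j : ℕ) ∧ (j : ℕ) < i₀ + 2 * d) := by
  by_cases hcol : ∃ j : Fin n, i₀ ≤ (j : ℕ) ∧ (j : ℕ) < i₀ + 2 * d ∧ (∑ k, B k j) ≠ d
  · exact Or.inl hcol
  push_neg at hcol
  right
  obtain ⟨f, hf, rfl⟩ := hB
  have hcn : i₀ + d - 1 < n := by omega
  set c : Fin n := ⟨i₀ + d - 1, hcn⟩ with hc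
  have hcv : (c : ℕ) = i₀ + d - 1 := rfl
  -- the set of rows with a 1 in column c
  set R : Finset (Fin n) := Finset.univ.filter
    (fun k => confMatrix n d f k c = 1) with hR
  have hsumc : (∑ k, confMatrix n d f k c) = d := by
    refine hcol c ?_ ?_ <;> omega
  have hRcard : R.card = d := by
    rw [hR, ← col_sum_eq_card n d f c]; exact hsumc
  have hmemNbr : ∀ v j : Fin n,
      j ∈ Nbr (confMatrix n d f) v ↔ confMatrix n d f v j = 1 := by
    intro v j; simp [Nbr]
  have hsubW : ∀ v : Fin n, confMatrix n d f v c = 1 →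
      ∀ j ∈ Nbr (confMatrix n d f) v, i₀ ≤ (j : ℕ) ∧ (j : ℕ) < i₀ + 2 * d := by
    intro v hv j hj
    rw [confMatrix_eq_one_iff] at hv
    rw [hmemNbr, confMatrix_eq_one_iff] at hj
    rw [hcv] at hv
    omega
  have hcc : confMatrix n d f c c = 1 := hdiag c
  by_cases hall : ∀ z ∈ R, Nbr (confMatrix n d f) z = Nbr (confMatrix n d f) c
  · exact absurd ⟨R, Nbr (confMatrix n d f) c, hRcard,
      nbr_card n d hd hdn f hf c, fun i hiR j hj => by
        rw [← hall i hiR] at hj; exact (hmemNbr i j).mp hj⟩ hno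
  · push_neg at hall
    obtain ⟨z, hzR, hzne⟩ := hall
    have hBz : confMatrix n d f z c = 1 := (Finset.mem_filter.mp hzR).2
    have hnc := nbr_card n d hd hdn f hf c
    have hnz := nbr_card n d hd hdn f hf z
    refine ⟨c, z, ?_, ?_, ?_, hnc, ?_, hsubW c hcc, hsubW z hBz⟩
    · rintro rfl; exact hzne rfl
    · refine Finset.card_pos.mpr ⟨c, Finset.mem_inter.mpr ⟨?_, ?_⟩⟩
      · exact (hmemNbr c c).mpr hcc
      · exact (hmemNbr z c).mpr hBz
    · refine lt_of_le_of_ne (Finset.card_le_card Finset.inter_subset_left)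
        fun hEq => hzne ?_
      have h1 : Nbr (confMatrix n d f) c ∩ Nbr (confMatrix n d f) z
          = Nbr (confMatrix n d f) c :=
        Finset.eq_of_subset_of_card_le Finset.inter_subset_left hEq.ge
      have h2 : Nbr (confMatrix n d f) c ⊆ Nbr (confMatrix n d f) z := by
        rw [← h1]; exact Finset.inter_subset_right
      exact (Finset.eq_of_subset_of_card_le h2 (by omega)).symm
    · intro j hj
      rcases Finset.mem_union.mp hj with h | h
      · obtain ⟨ha, hb⟩ := hsubW c hcc j h; exact hcol j ha hb
      · obtain ⟨ha, hb⟩ := hsubW z hBz j h; exact hcol j ha hb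
end

section
/- Let d ≥ 2, n ≥ 1 and T be integers with T even and 0 ≤ T ≤ n. Then for all integers x_1,…,x_n ≥ 1 satisfying ∑_{i=1}^n x_i = n·d and |{i : x_i ≠ d}| ≥ T, one has ∏_{i=1}^n (x_i!)^{1/x_i} ≤ (d!)^{(n−T)/d} · ((d−1)!)^{(T/2)/(d−1)} · ((d+1)!)^{(T/2)/(d+1)}, where the powers are real powers. Moreover, this bound is attained when exactly n−T of the x_i equal d, exactly T/2 of them equal d−1, and exactly T/2 of them equal d+1. -/
noncomputable def Lf (m : ℕ) : ℝ := Real.log m.factorial / m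

noncomputable def Df (m : ℕ) : ℝ := Lf (m + 1) - Lf m

lemma logfac_le (m : ℕ) (hm : 1 ≤ m) :
    Real.log m.factorial ≤ m * Real.log (m + 1) - m / 2 := by
  induction m, hm using Nat.le_induction with
  | base =>
    have h2 : (0.6931471803 : ℝ) < Real.log 2 := Real.log_two_gt_d9
    norm_num [Nat.factorial]
    linarith
  | succ m hm ih =>
    have hf : ((m + 1).factorial : ℝ) = ((m : ℝ) + 1) * (m.factorial : ℝ) := by
      push_cast [Nat.factorial_succ]; ring
    have hfp : (0 : ℝ) < m.factorial := by exact_mod_cast m.factorial_pos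
    have hlog : Real.log (m + 1).factorial
        = Real.log ((m : ℝ) + 1) + Real.log m.factorial := by
      rw [hf, Real.log_mul (by positivity) (by positivity)]
    -- log (m+1) - log (m+2) ≤ -1/(m+2)
    have hy : (0 : ℝ) < ((m : ℝ) + 1) / ((m : ℝ) + 2) := by positivity
    have hby := Real.log_le_sub_one_of_pos hy
    have hdiv : Real.log (((m : ℝ) + 1) / ((m : ℝ) + 2))
        = Real.log ((m : ℝ) + 1) - Real.log ((m : ℝ) + 2) := by
      rw [Real.log_div (by positivity) (by positivity)]
    have hkey : Real.log ((m : ℝ) + 1) - Real.log ((m : ℝ) + 2)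
        ≤ -1 / ((m : ℝ) + 2) := by
      rw [hdiv] at hby
      have : ((m : ℝ) + 1) / ((m : ℝ) + 2) - 1 = -1 / ((m : ℝ) + 2) := by
        field_simp
        norm_num
      linarith [hby, this.le]
    have hfrac : (1 : ℝ) / 2 ≤ ((m : ℝ) + 1) / ((m : ℝ) + 2) := by
      rw [div_le_div_iff₀ (by norm_num) (by positivity)]
      push_cast; linarith [Nat.cast_nonneg (α := ℝ) m]
    have hm2 : (0:ℝ) < (m:ℝ) + 2 := by positivity
    have hmain : ((m:ℝ)+1) * Real.log ((m:ℝ)+2) - ((m:ℝ)+1) * Real.log ((m:ℝ)+1) ≥ 1/2 := by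
      have h1 : Real.log ((m:ℝ)+2) - Real.log ((m:ℝ)+1) ≥ 1 / ((m:ℝ)+2) := by
        have : -1 / ((m : ℝ) + 2) = -(1 / ((m:ℝ)+2)) := by ring
        linarith [hkey, this.le]
      calc ((m:ℝ)+1) * Real.log ((m:ℝ)+2) - ((m:ℝ)+1) * Real.log ((m:ℝ)+1)
          = ((m:ℝ)+1) * (Real.log ((m:ℝ)+2) - Real.log ((m:ℝ)+1)) := by ring
        _
          ≥ ((m:ℝ)+1) * (1/((m:ℝ)+2)) := by
            apply mul_le_mul_of_nonneg_left h1 (by positivity)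
        _ = ((m:ℝ)+1)/((m:ℝ)+2) := by ring
        _ ≥ 1/2 := hfrac
    rw [hlog]
    push_cast
    have hgoal : ((m:ℝ) + 1 + 1) = ((m:ℝ) + 2) := by ring
    rw [hgoal]
    linarith [ih, hmain]

lemma Df_eq (m : ℕ) (hm : 1 ≤ m) :
    Df m = ((m : ℝ) * Real.log ((m : ℝ) + 1) - Real.log m.factorial) / (m * (m + 1)) := by
  have hm0 : (0:ℝ) < m := by exact_mod_cast hm
  have hf : ((m + 1).factorial : ℝ) = ((m : ℝ) + 1) * (m.factorial : ℝ) := by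
    push_cast [Nat.factorial_succ]; ring
  unfold Df Lf
  rw [hf, Real.log_mul (by positivity) (by positivity)]
  push_cast
  field_simp
  ring

lemma Df_anti (m : ℕ) (hm : 1 ≤ m) : Df (m + 1) ≤ Df m := by
  have hm0 : (0:ℝ) < m := by exact_mod_cast hm
  have hm1 : (1:ℝ) ≤ m := by exact_mod_cast hm
  rw [Df_eq m hm, Df_eq (m + 1) (by omega)]
  have hf : ((m + 1).factorial : ℝ) = ((m : ℝ) + 1) * (m.factorial : ℝ) := by
    push_cast [Nat.factorial_succ]; ring
  have hlog : Real.log (m + 1).factorial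
      = Real.log ((m : ℝ) + 1) + Real.log m.factorial := by
    rw [hf, Real.log_mul (by positivity) (by positivity)]
  have hG : (m : ℝ) / 2 ≤ (m : ℝ) * Real.log ((m : ℝ) + 1) - Real.log m.factorial := by
    linarith [logfac_le m hm]
  -- log (m+2) - log(m+1) ≤ 1/(m+1)
  have hy : (0 : ℝ) < ((m : ℝ) + 2) / ((m : ℝ) + 1) := by positivity
  have hby := Real.log_le_sub_one_of_pos hy
  have hdiv : Real.log (((m : ℝ) + 2) / ((m : ℝ) + 1))
      = Real.log ((m : ℝ) + 2) - Real.log ((m : ℝ) + 1) := by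
    rw [Real.log_div (by positivity) (by positivity)]
  have hc : Real.log ((m : ℝ) + 2) - Real.log ((m : ℝ) + 1) ≤ 1 / ((m : ℝ) + 1) := by
    rw [hdiv] at hby
    have : ((m : ℝ) + 2) / ((m : ℝ) + 1) - 1 = 1 / ((m:ℝ) + 1) := by
      field_simp
      norm_num
    linarith [hby, this.le]
  have hc2 : (m:ℝ) * ((m:ℝ)+1) * (Real.log ((m:ℝ)+2) - Real.log ((m:ℝ)+1)) ≤ (m:ℝ) := by
    have h := mul_le_mul_of_nonneg_left hc (by positivity : (0:ℝ) ≤ (m:ℝ) * ((m:ℝ)+1))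
    have h2 : (m:ℝ) * ((m:ℝ)+1) * (1/((m:ℝ)+1)) = (m:ℝ) := by field_simp
    linarith
  rw [hlog]
  rw [div_le_div_iff₀ (by positivity) (by positivity)]
  push_cast
  have e1 : ((m:ℝ) + 1 + 1) = (m:ℝ) + 2 := by ring
  rw [e1]
  have hprod : (0:ℝ) ≤ ((m:ℝ)+1) * (2*((m:ℝ) * Real.log ((m:ℝ)+1) - Real.log m.factorial) - (m:ℝ)*((m:ℝ)+1)*(Real.log ((m:ℝ)+2) - Real.log ((m:ℝ)+1))) :=
    mul_nonneg (by positivity) (by linarith [hG, hc2])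
  nlinarith [hprod]

lemma Df_mono {a b : ℕ} (ha : 1 ≤ a) (hab : a ≤ b) : Df b ≤ Df a := by
  induction b, hab using Nat.le_induction with
  | base => exact le_refl _
  | succ b hb ih => exact le_trans (Df_anti b (by omega)) ih

lemma Lf_upper {a b : ℕ} (ha : 1 ≤ a) (hab : a ≤ b) :
    Lf b - Lf a ≤ ((b : ℝ) - a) * Df a := by
  induction b, hab using Nat.le_induction with
  | base => simp
  | succ b hb ih =>
    have h1 : Df b ≤ Df a := Df_mono ha hb
    have h2 : Lf (b + 1) - Lf a = Df b + (Lf b - Lf a) := by unfold Df; ring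
    have hba : (0:ℝ) ≤ (b:ℝ) - a := by
      have : (a:ℝ) ≤ b := by exact_mod_cast hb
      linarith
    push_cast
    push_cast at ih
    nlinarith [ih, h1]

lemma Lf_lower {a b : ℕ} (ha : 1 ≤ a) (hab : a ≤ b) :
    ((b : ℝ) - a) * Df b ≤ Lf b - Lf a := by
  induction b, hab using Nat.le_induction with
  | base => simp
  | succ b hb ih =>
    have h1 : Df (b + 1) ≤ Df b := Df_anti b (by omega)
    have h2 : Lf (b + 1) - Lf a = Df b + (Lf b - Lf a) := by unfold Df; ring
    have hba : (0:ℝ) ≤ (b:ℝ) - a := by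
      have : (a:ℝ) ≤ b := by exact_mod_cast hb
      linarith
    have h3 : ((b:ℝ) + 1 - a) * Df (b + 1) ≤ ((b:ℝ) + 1 - a) * Df b :=
      mul_le_mul_of_nonneg_left h1 (by linarith)
    push_cast
    push_cast at ih
    nlinarith [ih, h3]

lemma chord_sum (e : ℕ) :
    Lf (e+3) - Lf (e+1) = Df (e+1) + Df (e+2) := by
  unfold Df
  rw [show e+1+1 = e+2 from rfl, show e+2+1 = e+3 from rfl]
  ring

lemma Lf_mid (e : ℕ) :
    Lf (e+1) + (Lf (e+3) - Lf (e+1))/2 ≤ Lf (e+2) := by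
  have h1 := Df_anti (e+1) (by omega)
  have h2 : Lf (e+2) = Lf (e+1) + Df (e+1) := by
    unfold Df; rw [show e+1+1 = e+2 from rfl]; ring
  have h3 := chord_sum e
  rw [show e+1+1 = e+2 from rfl] at h1
  linarith

lemma Lf_chord (e m : ℕ) (hm : 1 ≤ m) (hne : m ≠ e + 2) :
    Lf m ≤ Lf (e+1) + ((m:ℝ) - ((e:ℝ)+1)) * ((Lf (e+3) - Lf (e+1))/2) := by
  set s : ℝ := (Lf (e+3) - Lf (e+1))/2 with hs
  have hmono : Df (e+2) ≤ Df (e+1) := by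
    have := Df_anti (e+1) (by omega)
    rwa [show e+1+1 = e+2 from rfl] at this
  have hsum := chord_sum e
  have hs_le : s ≤ Df (e+1) := by rw [hs]; linarith
  have hle_s : Df (e+2) ≤ s := by rw [hs]; linarith
  rcases lt_or_gt_of_ne hne with h | h
  · -- m ≤ e + 1
    have hm1 : m ≤ e + 1 := by omega
    have hlow := Lf_lower hm hm1
    have hcast : ((e+1 : ℕ) : ℝ) = (e:ℝ) + 1 := by push_cast; ring
    rw [hcast] at hlow
    have hcoef : (0:ℝ) ≤ ((e:ℝ) + 1) - (m:ℝ) := by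
      have : (m:ℝ) ≤ (e:ℝ) + 1 := by exact_mod_cast hm1
      linarith
    have h2 : (((e:ℝ) + 1) - (m:ℝ)) * s ≤ (((e:ℝ) + 1) - (m:ℝ)) * Df (e+1) :=
      mul_le_mul_of_nonneg_left hs_le hcoef
    nlinarith [hlow, h2]
  · -- m ≥ e + 3
    have hm3 : e + 3 ≤ m := by omega
    have hup := Lf_upper (show 1 ≤ e + 3 by omega) hm3
    have hcast : ((e+3 : ℕ) : ℝ) = (e:ℝ) + 3 := by push_cast; ring
    rw [hcast] at hup
    have hD3 : Df (e+3) ≤ s := by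
      have := Df_anti (e+2) (by omega)
      rw [show e+2+1 = e+3 from rfl] at this
      linarith
    have hcoef : (0:ℝ) ≤ (m:ℝ) - ((e:ℝ) + 3) := by
      have : ((e:ℝ) + 3) ≤ (m:ℝ) := by exact_mod_cast hm3
      linarith
    have h2 : ((m:ℝ) - ((e:ℝ)+3)) * Df (e+3) ≤ ((m:ℝ) - ((e:ℝ)+3)) * s :=
      mul_le_mul_of_nonneg_left hD3 hcoef
    have h3 : Lf (e+3) = Lf (e+1) + 2 * s := by rw [hs]; ring
    nlinarith [hup, h2]

lemma key_sum (e n T : ℕ) (hTn : T ≤ n)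
    (x : Fin n → ℕ) (hx : ∀ i, 1 ≤ x i) (hsum : (∑ i, x i) = n * (e + 2))
    (hcard : T ≤ (Finset.univ.filter fun i => x i ≠ e + 2).card) :
    ∑ i, Lf (x i) ≤ ((n:ℝ) - T) * Lf (e+2) + ((T:ℝ)/2) * Lf (e+1) + ((T:ℝ)/2) * Lf (e+3) := by
  classical
  set S : Finset (Fin n) := Finset.univ.filter (fun i => x i ≠ e + 2) with hSdef
  set Sc : Finset (Fin n) := Finset.univ.filter (fun i => ¬ x i ≠ e + 2) with hScdef
  set k : ℕ := S.card with hk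
  have hcards : k + Sc.card = n := by
    have := Finset.card_filter_add_card_filter_not
      (s := Finset.univ) (p := fun i => x i ≠ e + 2)
    simpa [hSdef, hScdef, hk] using this
  have hkn : k ≤ n := by omega
  have hScCard : Sc.card = n - k := by omega
  -- values on the complement are e+2
  have hScval : ∀ i ∈ Sc, x i = e + 2 := by
    intro i hi
    simp only [hScdef, Finset.mem_filter, not_not] at hi
    exact hi.2
  -- sum of x over S
  have hsplitx : (∑ i ∈ S, x i) + (∑ i ∈ Sc, x i) = n * (e + 2) := by
    rw [← hsum]
    exact Finset.sum_filter_add_sum_filter_not _ _ _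
  have hScsum : ∑ i ∈ Sc, x i = (n - k) * (e + 2) := by
    rw [Finset.sum_congr rfl hScval, Finset.sum_const, hScCard, smul_eq_mul]
  have hSsum : ∑ i ∈ S, x i = k * (e + 2) := by
    have h1 : (n - (n - k)) * (e + 2) = n * (e + 2) - (n - k) * (e + 2) :=
      Nat.sub_mul _ _ _
    have h2 : n - (n - k) = k := by omega
    rw [h2] at h1
    have h3 : (n - k) * (e + 2) ≤ n * (e + 2) :=
      Nat.mul_le_mul_right _ (by omega)
    omega
  -- log-sum split
  have hsplitL : (∑ i ∈ S, Lf (x i)) + (∑ i ∈ Sc, Lf (x i)) = ∑ i, Lf (x i) :=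
    Finset.sum_filter_add_sum_filter_not _ _ _
  have hScL : ∑ i ∈ Sc, Lf (x i) = ((n:ℝ) - k) * Lf (e+2) := by
    rw [Finset.sum_congr rfl (fun i hi => by rw [hScval i hi]), Finset.sum_const,
      hScCard, nsmul_eq_mul]
    congr 1
    push_cast [Nat.cast_sub hkn]
    ring
  set s : ℝ := (Lf (e+3) - Lf (e+1))/2 with hs
  have hSL : ∑ i ∈ S, Lf (x i) ≤ (k:ℝ) * (Lf (e+1) + s) := by
    have hstep : ∑ i ∈ S, Lf (x i)
        ≤ ∑ i ∈ S, (Lf (e+1) + ((x i : ℝ) - ((e:ℝ)+1)) * s) := by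
      apply Finset.sum_le_sum
      intro i hi
      have hne : x i ≠ e + 2 := by
        simp only [hSdef, Finset.mem_filter] at hi
        exact hi.2
      exact Lf_chord e (x i) (hx i) hne
    have hxsumR : ∑ i ∈ S, (x i : ℝ) = (k:ℝ) * ((e:ℝ) + 2) := by
      rw [← Nat.cast_sum, hSsum]
      push_cast; ring
    have heval : ∑ i ∈ S, (Lf (e+1) + ((x i : ℝ) - ((e:ℝ)+1)) * s)
        = (k:ℝ) * (Lf (e+1) + s) := by
      rw [Finset.sum_add_distrib, Finset.sum_const, ← Finset.sum_mul,
        Finset.sum_sub_distrib, Finset.sum_const, hxsumR, ← hk, nsmul_eq_mul,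
        nsmul_eq_mul]
      ring
    linarith [hstep, heval.le]
  -- combine
  have hkT : (T:ℝ) ≤ (k:ℝ) := by exact_mod_cast hcard
  have hknR : (k:ℝ) ≤ (n:ℝ) := by exact_mod_cast hkn
  have hmid : Lf (e+1) + s ≤ Lf (e+2) := by
    have := Lf_mid e
    rw [← hs] at this
    exact this
  have htotal : ∑ i, Lf (x i) ≤ ((n:ℝ) - k) * Lf (e+2) + (k:ℝ) * (Lf (e+1) + s) := by
    linarith [hsplitL, hScL.le, hSL]
  have hfinal : ((n:ℝ) - k) * Lf (e+2) + (k:ℝ) * (Lf (e+1) + s)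
      ≤ ((n:ℝ) - T) * Lf (e+2) + (T:ℝ) * (Lf (e+1) + s) := by
    nlinarith [mul_nonneg (sub_nonneg.mpr hkT) (sub_nonneg.mpr hmid)]
  have hrhs : ((n:ℝ) - T) * Lf (e+2) + (T:ℝ) * (Lf (e+1) + s)
      = ((n:ℝ) - T) * Lf (e+2) + ((T:ℝ)/2) * Lf (e+1) + ((T:ℝ)/2) * Lf (e+3) := by
    rw [hs]; ring
  linarith [htotal, hfinal, hrhs.le]

lemma rpow_pow_div (a : ℝ) (ha : 0 ≤ a) (c : ℝ) (m : ℕ) :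
    (a ^ ((1:ℝ)/c)) ^ m = a ^ ((m:ℝ)/c) := by
  rw [← Real.rpow_natCast (a ^ ((1:ℝ)/c)) m, ← Real.rpow_mul ha]
  congr 1; ring

/-- Maximizing `∏ (xᵢ!)^(1/xᵢ)` subject to `∑ xᵢ = n·d`, `xᵢ ≥ 1`, and at least `T` of the
`xᵢ` different from `d` (`T` even): the product is at most
`F(d, n-T) · F(d-1, T/2) · F(d+1, T/2)` where `F(a,b) = (a!)^(b/a)`; moreover the bound is
attained when exactly `n-T` of the `xᵢ` equal `d` and exactly `T/2` of them equal each of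
`d-1` and `d+1`. -/
theorem factorial_product_max (d n T : ℕ) (hd : 2 ≤ d) (hn : 1 ≤ n)
    (hT : Even T) (hTn : T ≤ n) :
    (∀ x : Fin n → ℕ, (∀ i, 1 ≤ x i) → (∑ i, x i) = n * d →
      T ≤ (Finset.univ.filter fun i => x i ≠ d).card →
      ∏ i, ((x i).factorial : ℝ) ^ ((1 : ℝ) / (x i : ℝ)) ≤
        (d.factorial : ℝ) ^ (((n : ℝ) - (T : ℝ)) / (d : ℝ)) *
          ((d - 1).factorial : ℝ) ^ (((T : ℝ) / 2) / ((d : ℝ) - 1)) *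
          ((d + 1).factorial : ℝ) ^ (((T : ℝ) / 2) / ((d : ℝ) + 1))) ∧
    (∀ x : Fin n → ℕ,
      (Finset.univ.filter fun i => x i = d).card = n - T →
      (Finset.univ.filter fun i => x i = d - 1).card = T / 2 →
      (Finset.univ.filter fun i => x i = d + 1).card = T / 2 →
      ∏ i, ((x i).factorial : ℝ) ^ ((1 : ℝ) / (x i : ℝ)) =
        (d.factorial : ℝ) ^ (((n : ℝ) - (T : ℝ)) / (d : ℝ)) *
          ((d - 1).factorial : ℝ) ^ (((T : ℝ) / 2) / ((d : ℝ) - 1)) *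
          ((d + 1).factorial : ℝ) ^ (((T : ℝ) / 2) / ((d : ℝ) + 1))) := by
  classical
  obtain ⟨t, rfl⟩ := hT
  obtain ⟨e, rfl⟩ : ∃ e, d = e + 2 := ⟨d - 2, by omega⟩
  rw [show e + 2 - 1 = e + 1 from rfl]
  have hfp2 : (0:ℝ) < ((e+2).factorial : ℝ) := by exact_mod_cast (e+2).factorial_pos
  have hfp1 : (0:ℝ) < ((e+1).factorial : ℝ) := by exact_mod_cast (e+1).factorial_pos
  have hfp3 : (0:ℝ) < ((e+3).factorial : ℝ) := by exact_mod_cast (e+3).factorial_pos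
  have hRHS : ((e+2).factorial : ℝ) ^ (((n : ℝ) - ((t+t : ℕ) : ℝ)) / ((e+2 : ℕ) : ℝ)) *
        ((e+1).factorial : ℝ) ^ ((((t+t : ℕ) : ℝ) / 2) / (((e+2 : ℕ) : ℝ) - 1)) *
        ((e+2+1).factorial : ℝ) ^ ((((t+t : ℕ) : ℝ) / 2) / (((e+2 : ℕ) : ℝ) + 1))
      = Real.exp (((n:ℝ) - ((t+t : ℕ):ℝ)) * Lf (e+2)
          + (((t+t : ℕ):ℝ)/2) * Lf (e+1) + (((t+t : ℕ):ℝ)/2) * Lf (e+3)) := by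
    rw [show e+2+1 = e+3 from rfl]
    rw [Real.rpow_def_of_pos hfp2, Real.rpow_def_of_pos hfp1,
      Real.rpow_def_of_pos hfp3, ← Real.exp_add, ← Real.exp_add]
    congr 1
    unfold Lf
    push_cast
    ring
  constructor
  · intro x hx hsum hcard
    have key := key_sum e n (t+t) hTn x hx hsum hcard
    have hL : ∀ i, ((x i).factorial : ℝ) ^ ((1 : ℝ) / (x i : ℝ)) = Real.exp (Lf (x i)) := by
      intro i
      have hp : (0:ℝ) < ((x i).factorial : ℝ) := by exact_mod_cast (x i).factorial_pos
      rw [Real.rpow_def_of_pos hp]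
      unfold Lf
      rw [mul_one_div]
    rw [Finset.prod_congr rfl (fun i _ => hL i), ← Real.exp_sum, hRHS]
    exact Real.exp_le_exp.mpr key
  · intro x hA hB hC
    have h2 : (t + t) / 2 = t := by omega
    rw [h2] at hB hC
    set A : Finset (Fin n) := Finset.univ.filter (fun i => x i = e + 2) with hAdef
    set B : Finset (Fin n) := Finset.univ.filter (fun i => x i = e + 1) with hBdef
    set C : Finset (Fin n) := Finset.univ.filter (fun i => x i = e + 2 + 1) with hCdef
    have hAB : Disjoint A B := by
      rw [Finset.disjoint_left]
      intro i hiA hiB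
      simp only [hAdef, hBdef, Finset.mem_filter] at hiA hiB
      omega
    have hAC : Disjoint A C := by
      rw [Finset.disjoint_left]
      intro i hiA hiC
      simp only [hAdef, hCdef, Finset.mem_filter] at hiA hiC
      omega
    have hBC : Disjoint B C := by
      rw [Finset.disjoint_left]
      intro i hiB hiC
      simp only [hBdef, hCdef, Finset.mem_filter] at hiB hiC
      omega
    have hABC : Disjoint (A ∪ B) C := Finset.disjoint_union_left.mpr ⟨hAC, hBC⟩
    have hU : A ∪ B ∪ C = Finset.univ := by
      apply Finset.eq_univ_of_card
      rw [Finset.card_union_of_disjoint hABC, Finset.card_union_of_disjoint hAB,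
        hA, hB, hC, Fintype.card_fin]
      omega
    have hsplit : ∏ i, ((x i).factorial : ℝ) ^ ((1 : ℝ) / (x i : ℝ))
        = (∏ i ∈ A, ((x i).factorial : ℝ) ^ ((1 : ℝ) / (x i : ℝ)))
          * (∏ i ∈ B, ((x i).factorial : ℝ) ^ ((1 : ℝ) / (x i : ℝ)))
          * (∏ i ∈ C, ((x i).factorial : ℝ) ^ ((1 : ℝ) / (x i : ℝ))) := by
      rw [← Finset.prod_union hAB, ← Finset.prod_union hABC, hU]
    have hAval : ∏ i ∈ A, ((x i).factorial : ℝ) ^ ((1 : ℝ) / (x i : ℝ))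
        = (((e+2).factorial : ℝ) ^ ((1:ℝ)/((e+2 : ℕ):ℝ))) ^ A.card := by
      rw [Finset.prod_congr rfl (fun i hi => by
        simp only [hAdef, Finset.mem_filter] at hi
        rw [hi.2]), Finset.prod_const]
    have hBval : ∏ i ∈ B, ((x i).factorial : ℝ) ^ ((1 : ℝ) / (x i : ℝ))
        = (((e+1).factorial : ℝ) ^ ((1:ℝ)/((e+1 : ℕ):ℝ))) ^ B.card := by
      rw [Finset.prod_congr rfl (fun i hi => by
        simp only [hBdef, Finset.mem_filter] at hi
        rw [hi.2]), Finset.prod_const]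
    have hCval : ∏ i ∈ C, ((x i).factorial : ℝ) ^ ((1 : ℝ) / (x i : ℝ))
        = (((e+2+1).factorial : ℝ) ^ ((1:ℝ)/((e+2+1 : ℕ):ℝ))) ^ C.card := by
      rw [Finset.prod_congr rfl (fun i hi => by
        simp only [hCdef, Finset.mem_filter] at hi
        rw [hi.2]), Finset.prod_const]
    have hfp3' : (0:ℝ) ≤ ((e+2+1).factorial : ℝ) := by positivity
    rw [hsplit, hAval, hBval, hCval, hA, hB, hC,
      rpow_pow_div _ hfp2.le _ _, rpow_pow_div _ hfp1.le _ _, rpow_pow_div _ hfp3' _ _]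
    congr 1
    · congr 1
      · congr 1
        push_cast [Nat.cast_sub hTn]
        ring
      · congr 1
        push_cast
        ring
    · congr 1
      push_cast
      ring
end

section
/- Let A be an n×n (0,1)-matrix whose row sums are d_1, d_2, …, d_n, with d_i ≥ 1 for all i. Then per(A) ≤ ∏_{i=1}^n (d_i!)^{1/d_i}, where the powers are real powers. -/
/-!
Schrijver's argument. Let `r = per A`, let `dᵢ` be the row sums and `pᵢⱼ` the permanent of the
minor obtained by deleting row `i` and column `j`. Expanding along a row or a column gives
`∑ⱼ aᵢⱼ pᵢⱼ = r = ∑ᵢ aᵢⱼ pᵢⱼ`. Jensen's inequality for `x log x` on row `i`, with weights `aᵢⱼ`,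
gives `r log r ≤ r log dᵢ + ∑ⱼ aᵢⱼ pᵢⱼ log pᵢⱼ`. Bound each `pᵢⱼ log pᵢⱼ` by induction, sum over
the rows and use the column expansions: the right-hand side collapses to `n r ∑ₖ log (dₖ!) / dₖ`,
because `log d + log (d - 1)! = log d!`. Exponentiating `log r ≤ ∑ₖ log (dₖ!) / dₖ` gives the
theorem.
-/

open Finset Real
open scoped Nat Matrix

theorem mul_log_sum_le {ι : Type*} (s : Finset ι) (w p : ι → ℝ) (hw : ∀ i ∈ s, 0 ≤ w i)
    (hp : ∀ i ∈ s, 0 ≤ p i) :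
    (∑ i ∈ s, w i * p i) * log (∑ i ∈ s, w i * p i) ≤
      (∑ i ∈ s, w i * p i) * log (∑ i ∈ s, w i) + ∑ i ∈ s, w i * (p i * log (p i)) := by
  set D := ∑ i ∈ s, w i
  set R := ∑ i ∈ s, w i * p i
  rcases (sum_nonneg hw).eq_or_lt with hD | hD
  · have hw0 : ∀ i ∈ s, w i = 0 := (sum_eq_zero_iff_of_nonneg hw).1 hD.symm
    have hR : R = 0 := sum_eq_zero fun i hi => by simp [hw0 i hi]
    have hS : ∑ i ∈ s, w i * (p i * log (p i)) = 0 := sum_eq_zero fun i hi => by simp [hw0 i hi]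
    simp [hR, hS]
  · have hJ := convexOn_mul_log.map_sum_le (t := s) (w := fun i => w i / D) (p := p)
      (fun i hi => div_nonneg (hw i hi) hD.le) (by rw [← sum_div, div_self hD.ne'])
      (fun i hi => hp i hi)
    simp only [smul_eq_mul, div_mul_eq_mul_div, ← sum_div] at hJ
    have hlog : R * log (R / D) = R * log R - R * log D := by
      rcases eq_or_ne R 0 with hR | hR
      · simp [hR]
      · rw [log_div hR hD.ne', mul_sub]
    linarith [(div_le_div_iff_of_pos_right hD).1 hJ]

noncomputable def logFactorialRoot (m : ℕ) : ℝ := log m ! / m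

theorem exp_logFactorialRoot (m : ℕ) : exp (logFactorialRoot m) = (m ! : ℝ) ^ ((1 : ℝ) / m) := by
  rw [rpow_def_of_pos (by positivity), logFactorialRoot, mul_one_div]

theorem natCast_mul_logFactorialRoot (m : ℕ) : m * logFactorialRoot m = log m ! := by
  rcases eq_or_ne m 0 with rfl | hm
  · simp
  · exact mul_div_cancel₀ _ (Nat.cast_ne_zero.2 hm)

-- Also true at `d = 0`, where `d - 1 = 0` in `ℕ` and `log 0 = 0`.
theorem log_add_mul_logFactorialRoot_sub_one (d : ℕ) :
    log d + ((d : ℝ) - 1) * logFactorialRoot (d - 1) = d * logFactorialRoot d := by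
  cases d with
  | zero => simp [logFactorialRoot]
  | succ k =>
    rw [Nat.add_sub_cancel, Nat.cast_add_one, add_sub_cancel_right, natCast_mul_logFactorialRoot,
      ← Nat.cast_add_one, natCast_mul_logFactorialRoot, Nat.factorial_succ, Nat.cast_mul,
      log_mul (by positivity) (by positivity)]

theorem logFactorialRoot_sub_of_zero_or_one {a : ℕ} (ha : a = 0 ∨ a = 1) (d : ℕ) :
    logFactorialRoot (d - a) =
      logFactorialRoot d + a * (logFactorialRoot (d - 1) - logFactorialRoot d) := by
  rcases ha with rfl | rfl <;> simp

theorem sum_logFactorialRoot_sub_of_zero_or_one {ι : Type*} [Fintype ι] {a : ι → ℕ}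
    (ha : ∀ j, a j = 0 ∨ a j = 1) :
    ∑ j, logFactorialRoot ((∑ y, a y) - a j) = Fintype.card ι * logFactorialRoot (∑ y, a y) +
      (∑ y, a y : ℕ) * (logFactorialRoot ((∑ y, a y) - 1) - logFactorialRoot (∑ y, a y)) := by
  simp only [logFactorialRoot_sub_of_zero_or_one (ha _), sum_add_distrib, ← sum_mul, sum_const,
    card_univ, nsmul_eq_mul, Nat.cast_sum]

section Permanent

variable {n : ℕ}

def succAbovePerm (i j : Fin (n + 1)) (τ : Equiv.Perm (Fin n)) : Equiv.Perm (Fin (n + 1)) :=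
  ((finSuccEquiv' i).trans τ.optionCongr).trans (finSuccEquiv' j).symm

@[simp]
theorem succAbovePerm_apply_self (i j : Fin (n + 1)) (τ : Equiv.Perm (Fin n)) :
    succAbovePerm i j τ i = j := by
  simp [succAbovePerm]

@[simp]
theorem succAbovePerm_apply_succAbove (i j : Fin (n + 1)) (τ : Equiv.Perm (Fin n)) (x : Fin n) :
    succAbovePerm i j τ (i.succAbove x) = j.succAbove (τ x) := by
  simp [succAbovePerm]

theorem succAbovePerm_bijective (i : Fin (n + 1)) :
    Function.Bijective fun q : Fin (n + 1) × Equiv.Perm (Fin n) => succAbovePerm i q.1 q.2 := by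
  refine (Fintype.bijective_iff_injective_and_card _).2 ⟨?_, ?_⟩
  · rintro ⟨j, τ⟩ ⟨j', τ'⟩ h
    obtain rfl : j = j' := by simpa using DFunLike.congr_fun h i
    have hτ : τ = τ' := Equiv.ext fun x => by simpa using DFunLike.congr_fun h (i.succAbove x)
    rw [hτ]
  · simp [Fintype.card_perm, Nat.factorial_succ]

theorem permanent_succ_row (A : Matrix (Fin (n + 1)) (Fin (n + 1)) ℕ) (i : Fin (n + 1)) :
    permanent A = ∑ j, A i j * permanent (A.submatrix i.succAbove j.succAbove) := by
  rw [permanent, ← Fintype.sum_bijective _ (succAbovePerm_bijective i) _ _ fun _ => rfl,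
    Fintype.sum_prod_type]
  refine sum_congr rfl fun j _ => ?_
  simp [permanent, mul_sum, Fin.prod_univ_succAbove _ i]

theorem permanent_transpose (A : Matrix (Fin n) (Fin n) ℕ) : permanent Aᵀ = permanent A :=
  Matrix.permanent_transpose Aᵀ

theorem permanent_succ_column (A : Matrix (Fin (n + 1)) (Fin (n + 1)) ℕ) (j : Fin (n + 1)) :
    permanent A = ∑ i, A i j * permanent (A.submatrix i.succAbove j.succAbove) := by
  rw [← permanent_transpose, permanent_succ_row _ j]
  simp [← permanent_transpose (A.submatrix _ _)]

theorem sum_submatrix_succAbove (A : Matrix (Fin (n + 1)) (Fin (n + 1)) ℕ) (i j : Fin (n + 1))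
    (k : Fin n) :
    ∑ y, A.submatrix i.succAbove j.succAbove k y =
      (∑ y, A (i.succAbove k) y) - A (i.succAbove k) j := by
  simp [Fin.sum_univ_succAbove _ j]

end Permanent

theorem sum_logFactorialRoot_rowSum_submatrix {n : ℕ}
    (A : Matrix (Fin (n + 1)) (Fin (n + 1)) ℕ) (i j : Fin (n + 1)) :
    ∑ k, logFactorialRoot (∑ y, A.submatrix i.succAbove j.succAbove k y) =
      ∑ k, logFactorialRoot ((∑ y, A k y) - A k j) - logFactorialRoot ((∑ y, A i y) - A i j) := by
  rw [Fin.sum_univ_succAbove (fun k => logFactorialRoot ((∑ y, A k y) - A k j)) i,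
    add_sub_cancel_left]
  simp only [sum_submatrix_succAbove]

theorem permanent_mul_log_le_of_submatrix {n : ℕ}
    (A : Matrix (Fin (n + 1)) (Fin (n + 1)) ℕ) (h01 : ∀ i j, A i j = 0 ∨ A i j = 1)
    (hminor : ∀ i j : Fin (n + 1), (permanent (A.submatrix i.succAbove j.succAbove) : ℝ) *
        log (permanent (A.submatrix i.succAbove j.succAbove)) ≤
      permanent (A.submatrix i.succAbove j.succAbove) *
        ∑ k, logFactorialRoot (∑ y, A.submatrix i.succAbove j.succAbove k y)) :
    (permanent A : ℝ) * log (permanent A) ≤ permanent A * ∑ i, logFactorialRoot (∑ j, A i j) := by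
  set r : ℝ := (permanent A : ℝ)
  set p : Fin (n + 1) → Fin (n + 1) → ℝ :=
    fun i j => (permanent (A.submatrix i.succAbove j.succAbove) : ℝ)
  set d : Fin (n + 1) → ℕ := fun i => ∑ j, A i j
  set c : Fin (n + 1) → Fin (n + 1) → ℝ := fun k j => logFactorialRoot (d k - A k j)
  have hrow : ∀ i, ∑ j, (A i j : ℝ) * p i j = r := fun i => by
    simp only [r, p]; exact_mod_cast (permanent_succ_row A i).symm
  have hcol : ∀ j, ∑ i, (A i j : ℝ) * p i j = r := fun j => by
    simp only [r, p]; exact_mod_cast (permanent_succ_column A j).symm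
  have hminor' : ∀ i j, (A i j : ℝ) * (p i j * log (p i j)) ≤
      A i j * p i j * (∑ k, c k j - logFactorialRoot (d i - 1)) := fun i j => by
    rcases h01 i j with h | h
    · simp [h]
    · have := hminor i j
      rw [sum_logFactorialRoot_rowSum_submatrix] at this
      simpa [h] using this
  have hrow_le : ∀ i, r * log r ≤
      r * (log (d i) - logFactorialRoot (d i - 1)) + ∑ j, A i j * p i j * ∑ k, c k j := fun i =>
    calc r * log r ≤ r * log (d i) + ∑ j, (A i j : ℝ) * (p i j * log (p i j)) := by
          simpa [hrow, d] using mul_log_sum_le univ (fun j => (A i j : ℝ)) (p i)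
            (fun _ _ => by positivity) (fun _ _ => by positivity)
      _ ≤ r * log (d i) + ∑ j, A i j * p i j * (∑ k, c k j - logFactorialRoot (d i - 1)) :=
          add_le_add_right (sum_le_sum fun j _ => hminor' i j) _
      _ = _ := by simp only [mul_sub, sum_sub_distrib, ← sum_mul, hrow]; ring
  have hsum : (n + 1 : ℝ) * (r * log r) ≤ (n + 1 : ℝ) * (r * ∑ k, logFactorialRoot (d k)) :=
    calc (n + 1 : ℝ) * (r * log r) = ∑ _i : Fin (n + 1), r * log r := by simp
      _ ≤ ∑ i, (r * (log (d i) - logFactorialRoot (d i - 1)) +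
            ∑ j, A i j * p i j * ∑ k, c k j) :=
          sum_le_sum fun i _ => hrow_le i
      _ = r * ∑ k, (log (d k) - logFactorialRoot (d k - 1) + ∑ j, c k j) := by
          have hswap :
              ∑ i, ∑ j, (A i j : ℝ) * p i j * ∑ k, c k j = r * ∑ k, ∑ j, c k j := by
            rw [sum_comm, sum_comm (f := c)]
            simp_rw [← sum_mul, hcol, ← mul_sum]
          rw [sum_add_distrib, hswap, ← mul_sum, ← mul_add, ← sum_add_distrib]
      _ = _ := by
          rw [mul_sum, mul_sum, mul_sum]
          refine sum_congr rfl fun k _ => ?_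
          rw [sum_logFactorialRoot_sub_of_zero_or_one (h01 k), Fintype.card_fin,
            Nat.cast_add_one]
          linear_combination r * log_add_mul_logFactorialRoot_sub_one (d k)
  exact le_of_mul_le_mul_left hsum (by positivity)

-- Multiplying by `per A` makes the bound hold also when the permanent vanishes, so the induction
-- needs no positivity hypotheses on minors.
theorem permanent_mul_log_le {n : ℕ} (A : Matrix (Fin n) (Fin n) ℕ)
    (h01 : ∀ i j, A i j = 0 ∨ A i j = 1) :
    (permanent A : ℝ) * log (permanent A) ≤ permanent A * ∑ i, logFactorialRoot (∑ j, A i j) := by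
  induction n with
  | zero => simp [permanent]
  | succ n ih =>
    exact permanent_mul_log_le_of_submatrix A h01 fun i j => ih _ fun _ _ => h01 _ _

theorem bregman_general (n : ℕ) (A : Matrix (Fin n) (Fin n) ℕ)
    (h01 : ∀ i j, A i j = 0 ∨ A i j = 1)
    (d : Fin n → ℕ) (hd : ∀ i, d i = ∑ j, A i j) :
    (permanent A : ℝ) ≤ ∏ i, ((d i).factorial : ℝ) ^ ((1 : ℝ) / (d i : ℝ)) := by
  rcases Nat.eq_zero_or_pos (permanent A) with h0 | hpos
  · rw [h0, Nat.cast_zero]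
    positivity
  have hr : (0 : ℝ) < permanent A := by exact_mod_cast hpos
  have hlog : log (permanent A) ≤ ∑ i, logFactorialRoot (d i) := by
    simpa only [hd] using le_of_mul_le_mul_left (permanent_mul_log_le A h01) hr
  calc (permanent A : ℝ) = exp (log (permanent A)) := (exp_log hr).symm
    _ ≤ exp (∑ i, logFactorialRoot (d i)) := exp_le_exp.2 hlog
    _ = _ := by simp only [exp_sum, exp_logFactorialRoot]

/-- **Brégman's theorem** (the Minc conjecture). If `A` is an `n × n` `(0,1)`-matrix with
row sums `d₁, …, d_n`, all positive, then `per(A) ≤ ∏_i (d_i!)^(1/d_i)`. -/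
theorem bregman (n : ℕ) (A : Matrix (Fin n) (Fin n) ℕ)
    (h01 : ∀ i j, A i j = 0 ∨ A i j = 1)
    (d : Fin n → ℕ) (hd : ∀ i, d i = ∑ j, A i j) (hpos : ∀ i, 1 ≤ d i) :
    (permanent A : ℝ) ≤ ∏ i, ((d i).factorial : ℝ) ^ ((1 : ℝ) / (d i : ℝ)) :=
  bregman_general n A h01 d hd
end
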